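/- arXiv:1104.5686 — 2 statements merged into one kernel-verified Lean document; each statement's English description precedes it below -/
import Mathlib

section
/- At every point (0,w) of the Cartan–Hartogs domain M_Ω(μ) and for all 1 ≤ j,k,l ≤ d, the curvature tensor of g(μ) satisfies [R_{wj̄kl̄}]_{z=0} = 0, [R_{jw̄lk̄}]_{z=0} = 0, [R_{ww̄wl̄}]_{z=0} = 0 and [R_{ww̄lw̄}]_{z=0} = 0. -/
open Complex Matrix
open scoped ComplexOrder

noncomputable section

/-- Wirtinger derivative `∂f/∂z_j` of a function `f : ℂ^n → ℂ`. -/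
def wD {n : ℕ} (j : Fin n) (f : (Fin n → ℂ) → ℂ) : (Fin n → ℂ) → ℂ :=
  fun p => (1 / 2 : ℂ) *
    (fderiv ℝ f p (Pi.single j 1) - Complex.I * fderiv ℝ f p (Pi.single j Complex.I))

/-- Conjugate Wirtinger derivative `∂f/∂z̄_j` of a function `f : ℂ^n → ℂ`. -/
def wDbar {n : ℕ} (j : Fin n) (f : (Fin n → ℂ) → ℂ) : (Fin n → ℂ) → ℂ :=
  fun p => (1 / 2 : ℂ) *
    (fderiv ℝ f p (Pi.single j 1) + Complex.I * fderiv ℝ f p (Pi.single j Complex.I))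

variable (d : ℕ) (μ : ℝ) (N : (Fin d → ℂ) → ℝ)

/-- `N^μ` as a complex-valued function on `ℂ^d`. -/
def NmuC : (Fin d → ℂ) → ℂ := fun z => ((N z ^ μ : ℝ) : ℂ)

/-- The Kähler potential `Φ(z,w) = -log(N(z)^μ - |w|²)` of the Cartan–Hartogs domain,
identifying `(z,w)` with the point `p : ℂ^{d+1}`, `z = p ∘ castSucc`, `w = p (last)`. -/
def CHpot : (Fin (d + 1) → ℂ) → ℂ :=
  fun p =>
    -(((Real.log (N (fun j => p j.castSucc) ^ μ - ‖p (Fin.last d)‖ ^ 2)) : ℂ))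

/-- The component `g(μ)_{αβ̄} = ∂²Φ/∂z_α∂z̄_β` of the Cartan--Hartogs metric. -/
def gCH (α β : Fin (d + 1)) : (Fin (d + 1) → ℂ) → ℂ := wD α (wDbar β (CHpot d μ N))

/-- The matrix of the Cartan--Hartogs metric `g(μ)` at a point `p`. -/
def gCHmat (p : Fin (d + 1) → ℂ) : Matrix (Fin (d + 1)) (Fin (d + 1)) ℂ :=
  Matrix.of fun α β => gCH d μ N α β p

/-- The component `g^{Ω(μ)}_{jk̄} = -∂² log N^μ/∂z_j∂z̄_k`. -/
def gOm (j k : Fin d) : (Fin d → ℂ) → ℂ :=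
  fun z => -(wD j (wDbar k fun y => ((Real.log (N y ^ μ) : ℝ) : ℂ)) z)

/-- The matrix of the metric `g^{Ω(μ)}` at a point `z ∈ Ω`. -/
def gOmMat (z : Fin d → ℂ) : Matrix (Fin d) (Fin d) ℂ :=
  Matrix.of fun j k => gOm d μ N j k z

/-- The Ricci tensor `Ric_{αβ̄} = -∂² log det(g(μ))/∂z_α∂z̄_β` of `g(μ)`. -/
def RicCH (α β : Fin (d + 1)) : (Fin (d + 1) → ℂ) → ℂ :=
  fun p => -(wD α (wDbar β fun q => Complex.log ((gCHmat d μ N q).det)) p)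

/-- The scalar curvature `κ_{g(μ)} = Σ_{α,β} g(μ)^{βᾱ} Ric_{αβ̄}` of `g(μ)`. -/
def scalCH : (Fin (d + 1) → ℂ) → ℂ :=
  fun p => ∑ α : Fin (d + 1), ∑ β : Fin (d + 1),
    (gCHmat d μ N p)⁻¹ β α * RicCH d μ N α β p

/-- The curvature tensor
`R_{αβ̄ητ̄} = -g(μ)_{αβ̄ητ̄} + Σ_{ζ,θ} g(μ)^{ζθ̄} g(μ)_{αζ̄η} g(μ)_{θτ̄β̄}` of `g(μ)`. -/
def Rcurv (α β η τ : Fin (d + 1)) : (Fin (d + 1) → ℂ) → ℂ :=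
  fun p => -(wDbar τ (wD η (gCH d μ N α β)) p) +
    ∑ ζ : Fin (d + 1), ∑ θ : Fin (d + 1),
      (gCHmat d μ N p)⁻¹ ζ θ * wD η (gCH d μ N α ζ) p * wDbar β (gCH d μ N θ τ) p

/-- The squared norm `|R|²` of the curvature tensor of `g(μ)`. -/
def Rnorm2 : (Fin (d + 1) → ℂ) → ℂ :=
  fun p => ∑ α : Fin (d+1), ∑ β : Fin (d+1), ∑ η : Fin (d+1), ∑ θ : Fin (d+1),
    ∑ ζ : Fin (d+1), ∑ ν : Fin (d+1), ∑ ξ : Fin (d+1), ∑ τ : Fin (d+1),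
      (starRingEnd ℂ) ((gCHmat d μ N p)⁻¹ α ζ) * (gCHmat d μ N p)⁻¹ β ν *
      (starRingEnd ℂ) ((gCHmat d μ N p)⁻¹ η ξ) * (gCHmat d μ N p)⁻¹ θ τ *
      Rcurv d μ N α β η θ p * (starRingEnd ℂ) (Rcurv d μ N ζ ν ξ τ p)

/-- The squared norm `|Ric|²` of the Ricci tensor of `g(μ)`. -/
def RicNorm2 : (Fin (d + 1) → ℂ) → ℂ :=
  fun p => ∑ α : Fin (d+1), ∑ β : Fin (d+1), ∑ η : Fin (d+1), ∑ τ : Fin (d+1),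
    (starRingEnd ℂ) ((gCHmat d μ N p)⁻¹ η τ) * (gCHmat d μ N p)⁻¹ α β *
    RicCH d μ N η α p * (starRingEnd ℂ) (RicCH d μ N τ β p)

/-- The Laplacian `Δκ_{g(μ)} = Σ_{α,β} g(μ)^{αβ̄} ∂²κ_{g(μ)}/∂z_α∂z̄_β`. -/
def lapScalCH : (Fin (d + 1) → ℂ) → ℂ :=
  fun p => ∑ α : Fin (d+1), ∑ β : Fin (d+1),
    (gCHmat d μ N p)⁻¹ α β * wDbar β (wD α (scalCH d μ N)) p

/-- The Ricci tensor of `g^{Ω(μ)}`. -/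
def RicOm (j k : Fin d) : (Fin d → ℂ) → ℂ :=
  fun z => -(wD j (wDbar k fun y => Complex.log ((gOmMat d μ N y).det)) z)

/-- The scalar curvature `κ_{g^{Ω(μ)}}` of `g^{Ω(μ)}`. -/
def scalOm : (Fin d → ℂ) → ℂ :=
  fun z => ∑ j : Fin d, ∑ k : Fin d, (gOmMat d μ N z)⁻¹ k j * RicOm d μ N j k z

/-- The curvature tensor of `g^{Ω(μ)}`. -/
def RcurvOm (i j k l : Fin d) : (Fin d → ℂ) → ℂ :=
  fun z => -(wDbar l (wD k (gOm d μ N i j)) z) +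
    ∑ p : Fin d, ∑ q : Fin d,
      (gOmMat d μ N z)⁻¹ p q * wD k (gOm d μ N i p) z * wDbar j (gOm d μ N q l) z

/-- The squared norm `|R_{g^{Ω(μ)}}|²` of the curvature tensor of `g^{Ω(μ)}`. -/
def Rnorm2Om : (Fin d → ℂ) → ℂ :=
  fun z => ∑ α : Fin d, ∑ β : Fin d, ∑ η : Fin d, ∑ θ : Fin d,
    ∑ ζ : Fin d, ∑ ν : Fin d, ∑ ξ : Fin d, ∑ τ : Fin d,
      (starRingEnd ℂ) ((gOmMat d μ N z)⁻¹ α ζ) * (gOmMat d μ N z)⁻¹ β ν *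
      (starRingEnd ℂ) ((gOmMat d μ N z)⁻¹ η ξ) * (gOmMat d μ N z)⁻¹ θ τ *
      RcurvOm d μ N α β η θ z * (starRingEnd ℂ) (RcurvOm d μ N ζ ν ξ τ z)

end


noncomputable section
namespace CHTools
variable {n : ℕ} {f g : (Fin n → ℂ) → ℂ} {p : Fin n → ℂ} {v : Fin n → ℂ}

/-- directional derivative -/
def dD (v : Fin n → ℂ) (f : (Fin n → ℂ) → ℂ) (p : Fin n → ℂ) : ℂ := fderiv ℝ f p v

lemma wD_eq (j : Fin n) (f) (p) :
    wD j f p = (1/2 : ℂ) * (dD (Pi.single j 1) f p - I * dD (Pi.single j I) f p) := rfl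

lemma wDbar_eq (j : Fin n) (f) (p) :
    wDbar j f p = (1/2 : ℂ) * (dD (Pi.single j 1) f p + I * dD (Pi.single j I) f p) := rfl

lemma dD_congr (h : f =ᶠ[nhds p] g) : dD v f p = dD v g p := by
  unfold dD; rw [Filter.EventuallyEq.fderiv_eq h]

lemma wD_congr {j : Fin n} (h : f =ᶠ[nhds p] g) : wD j f p = wD j g p := by
  rw [wD_eq, wD_eq, dD_congr h, dD_congr h]

lemma wDbar_congr {j : Fin n} (h : f =ᶠ[nhds p] g) : wDbar j f p = wDbar j g p := by
  rw [wDbar_eq, wDbar_eq, dD_congr h, dD_congr h]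

lemma dD_add (hf : DifferentiableAt ℝ f p) (hg : DifferentiableAt ℝ g p) :
    dD v (fun q => f q + g q) p = dD v f p + dD v g p := by
  unfold dD; rw [fderiv_fun_add hf hg]; rfl

lemma dD_neg : dD v (fun q => -f q) p = -dD v f p := by
  unfold dD; rw [fderiv_fun_neg]; rfl

lemma dD_sub (hf : DifferentiableAt ℝ f p) (hg : DifferentiableAt ℝ g p) :
    dD v (fun q => f q - g q) p = dD v f p - dD v g p := by
  unfold dD; rw [fderiv_fun_sub hf hg]; rfl

lemma dD_const (c : ℂ) : dD v (fun _ => c) p = 0 := by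
  unfold dD; rw [fderiv_fun_const]; rfl

lemma dD_mul (hf : DifferentiableAt ℝ f p) (hg : DifferentiableAt ℝ g p) :
    dD v (fun q => f q * g q) p = f p * dD v g p + g p * dD v f p := by
  unfold dD; rw [fderiv_fun_mul hf hg]
  simp [smul_eq_mul]

lemma dD_comp_holo {h : ℂ → ℂ} (hh : DifferentiableAt ℂ h (f p))
    (hf : DifferentiableAt ℝ f p) :
    dD v (fun q => h (f q)) p = deriv h (f p) * dD v f p := by
  have h3 : ∀ u : ℂ, fderiv ℂ h (f p) u = deriv h (f p) * u := by
    intro u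
    have e : fderiv ℂ h (f p) u = fderiv ℂ h (f p) (u • 1) := by simp
    rw [e, _root_.map_smul, smul_eq_mul, mul_comm]
    rfl
  unfold dD
  rw [show fderiv ℝ (fun q => h (f q)) p = (fderiv ℝ h (f p)).comp (fderiv ℝ f p) from
    fderiv_comp p (hh.restrictScalars ℝ) hf]
  rw [ContinuousLinearMap.comp_apply, hh.fderiv_restrictScalars ℝ,
    ContinuousLinearMap.coe_restrictScalars']
  exact h3 _

lemma dD_coord (i : Fin n) : dD v (fun q => q i) p = v i := by
  unfold dD
  have : fderiv ℝ (fun q : Fin n → ℂ => q i) p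
      = ContinuousLinearMap.proj (R := ℝ) (φ := fun _ : Fin n => ℂ) i :=
    (ContinuousLinearMap.proj (R := ℝ) (φ := fun _ : Fin n => ℂ) i).fderiv
  rw [this]; rfl

lemma dD_conj_coord (i : Fin n) : dD v (fun q => starRingEnd ℂ (q i)) p = starRingEnd ℂ (v i) := by
  unfold dD
  have : fderiv ℝ (fun q : Fin n → ℂ => starRingEnd ℂ (q i)) p
      = (Complex.conjCLE.toContinuousLinearMap).comp
          (ContinuousLinearMap.proj (R := ℝ) (φ := fun _ : Fin n => ℂ) i) := by
    have := ((Complex.conjCLE.toContinuousLinearMap).comp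
        (ContinuousLinearMap.proj (R := ℝ) (φ := fun _ : Fin n => ℂ) i)).fderiv (x := p)
    convert this using 2 <;> rfl
  rw [this]; rfl


lemma dD_const_mul (c : ℂ) (hf : DifferentiableAt ℝ f p) :
    dD v (fun q => c * f q) p = c * dD v f p := by
  unfold dD; rw [fderiv_const_mul hf c]; rfl

lemma dD_clm {m : ℕ} (L : (Fin n → ℂ) →L[ℝ] (Fin m → ℂ)) {f : (Fin m → ℂ) → ℂ}
    (hf : DifferentiableAt ℝ f (L p)) :
    dD v (fun q => f (L q)) p = dD (L v) f (L p) := by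
  unfold dD
  have h := fderiv_comp p hf L.differentiableAt
  rw [L.fderiv] at h
  rw [show (fun q => f (L q)) = f ∘ L from rfl, h]; rfl

lemma dD_diff (hf : ContDiffAt ℝ 2 f p) (u : Fin n → ℂ) :
    DifferentiableAt ℝ (fun q => dD u f q) p := by
  have h1 : DifferentiableAt ℝ (fderiv ℝ f) p := by
    have h := hf.fderiv_right (m := 1) (by norm_num)
    exact h.differentiableAt one_ne_zero
  exact ((ContinuousLinearMap.apply ℝ ℂ u).differentiableAt).comp p h1

lemma dD_dD (hf : ContDiffAt ℝ 2 f p) (u : Fin n → ℂ) :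
    dD v (fun q => dD u f q) p = fderiv ℝ (fderiv ℝ f) p v u := by
  have h1 : DifferentiableAt ℝ (fderiv ℝ f) p := by
    have h := hf.fderiv_right (m := 1) (by norm_num)
    exact h.differentiableAt one_ne_zero
  have h2 := ((ContinuousLinearMap.apply ℝ ℂ u).hasFDerivAt).comp p h1.hasFDerivAt
  have h3 : fderiv ℝ (fun q => dD u f q) p
      = (ContinuousLinearMap.apply ℝ ℂ u).comp (fderiv ℝ (fderiv ℝ f) p) := h2.fderiv
  show fderiv ℝ (fun q => dD u f q) p v = _
  rw [h3]; rfl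


-- wD/wDbar level rules
variable {j : Fin n}

lemma wD_add (hf : DifferentiableAt ℝ f p) (hg : DifferentiableAt ℝ g p) :
    wD j (fun q => f q + g q) p = wD j f p + wD j g p := by
  rw [wD_eq, wD_eq, wD_eq, dD_add hf hg, dD_add hf hg]; ring

lemma wDbar_add (hf : DifferentiableAt ℝ f p) (hg : DifferentiableAt ℝ g p) :
    wDbar j (fun q => f q + g q) p = wDbar j f p + wDbar j g p := by
  rw [wDbar_eq, wDbar_eq, wDbar_eq, dD_add hf hg, dD_add hf hg]; ring

lemma wD_sub (hf : DifferentiableAt ℝ f p) (hg : DifferentiableAt ℝ g p) :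
    wD j (fun q => f q - g q) p = wD j f p - wD j g p := by
  rw [wD_eq, wD_eq, wD_eq, dD_sub hf hg, dD_sub hf hg]; ring

lemma wDbar_sub (hf : DifferentiableAt ℝ f p) (hg : DifferentiableAt ℝ g p) :
    wDbar j (fun q => f q - g q) p = wDbar j f p - wDbar j g p := by
  rw [wDbar_eq, wDbar_eq, wDbar_eq, dD_sub hf hg, dD_sub hf hg]; ring

lemma wD_neg : wD j (fun q => -f q) p = -wD j f p := by
  rw [wD_eq, wD_eq, dD_neg, dD_neg]; ring

lemma wDbar_neg : wDbar j (fun q => -f q) p = -wDbar j f p := by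
  rw [wDbar_eq, wDbar_eq, dD_neg, dD_neg]; ring

lemma wD_const (c : ℂ) : wD j (fun _ => c) p = 0 := by
  rw [wD_eq, dD_const, dD_const]; ring

lemma wDbar_const (c : ℂ) : wDbar j (fun _ => c) p = 0 := by
  rw [wDbar_eq, dD_const, dD_const]; ring

lemma wD_mul (hf : DifferentiableAt ℝ f p) (hg : DifferentiableAt ℝ g p) :
    wD j (fun q => f q * g q) p = f p * wD j g p + g p * wD j f p := by
  rw [wD_eq, wD_eq, wD_eq, dD_mul hf hg, dD_mul hf hg]; ring

lemma wDbar_mul (hf : DifferentiableAt ℝ f p) (hg : DifferentiableAt ℝ g p) :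
    wDbar j (fun q => f q * g q) p = f p * wDbar j g p + g p * wDbar j f p := by
  rw [wDbar_eq, wDbar_eq, wDbar_eq, dD_mul hf hg, dD_mul hf hg]; ring

lemma wD_const_mul (c : ℂ) (hf : DifferentiableAt ℝ f p) :
    wD j (fun q => c * f q) p = c * wD j f p := by
  rw [wD_eq, wD_eq, dD_const_mul c hf, dD_const_mul c hf]; ring

lemma wDbar_const_mul (c : ℂ) (hf : DifferentiableAt ℝ f p) :
    wDbar j (fun q => c * f q) p = c * wDbar j f p := by
  rw [wDbar_eq, wDbar_eq, dD_const_mul c hf, dD_const_mul c hf]; ring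

lemma wD_comp_holo {h : ℂ → ℂ} (hh : DifferentiableAt ℂ h (f p))
    (hf : DifferentiableAt ℝ f p) :
    wD j (fun q => h (f q)) p = deriv h (f p) * wD j f p := by
  rw [wD_eq, wD_eq, dD_comp_holo hh hf, dD_comp_holo hh hf]; ring

lemma wDbar_comp_holo {h : ℂ → ℂ} (hh : DifferentiableAt ℂ h (f p))
    (hf : DifferentiableAt ℝ f p) :
    wDbar j (fun q => h (f q)) p = deriv h (f p) * wDbar j f p := by
  rw [wDbar_eq, wDbar_eq, dD_comp_holo hh hf, dD_comp_holo hh hf]; ring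

lemma wD_inv (hf : DifferentiableAt ℝ f p) (h0 : f p ≠ 0) :
    wD j (fun q => (f q)⁻¹) p = -((f p)⁻¹ * (f p)⁻¹) * wD j f p := by
  rw [wD_comp_holo (differentiableAt_inv h0) hf, deriv_inv, sq, mul_inv]

lemma wDbar_inv (hf : DifferentiableAt ℝ f p) (h0 : f p ≠ 0) :
    wDbar j (fun q => (f q)⁻¹) p = -((f p)⁻¹ * (f p)⁻¹) * wDbar j f p := by
  rw [wDbar_comp_holo (differentiableAt_inv h0) hf, deriv_inv, sq, mul_inv]

lemma wD_coord (i : Fin n) : wD j (fun q => q i) p = if i = j then 1 else 0 := by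
  rw [wD_eq, dD_coord, dD_coord]
  by_cases h : i = j
  · subst h; rw [Pi.single_eq_same, Pi.single_eq_same]; simp [Complex.I_mul_I]; ring
  · rw [Pi.single_eq_of_ne h, Pi.single_eq_of_ne h]; simp [h]

lemma wDbar_coord (i : Fin n) : wDbar j (fun q => q i) p = 0 := by
  rw [wDbar_eq, dD_coord, dD_coord]
  by_cases h : i = j
  · subst h; rw [Pi.single_eq_same, Pi.single_eq_same]; simp [Complex.I_mul_I]
  · rw [Pi.single_eq_of_ne h, Pi.single_eq_of_ne h]; simp

lemma wD_conj_coord (i : Fin n) : wD j (fun q => starRingEnd ℂ (q i)) p = 0 := by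
  rw [wD_eq, dD_conj_coord, dD_conj_coord]
  by_cases h : i = j
  · subst h; rw [Pi.single_eq_same, Pi.single_eq_same]; simp
  · rw [Pi.single_eq_of_ne h, Pi.single_eq_of_ne h]; simp

lemma wDbar_conj_coord (i : Fin n) :
    wDbar j (fun q => starRingEnd ℂ (q i)) p = if i = j then 1 else 0 := by
  rw [wDbar_eq, dD_conj_coord, dD_conj_coord]
  by_cases h : i = j
  · subst h; rw [Pi.single_eq_same, Pi.single_eq_same]; simp; ring
  · rw [Pi.single_eq_of_ne h, Pi.single_eq_of_ne h]; simp [h]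


lemma dD_wDbar (hf : ContDiffAt ℝ 2 f p) (b : Fin n) :
    dD v (wDbar b f) p = (1/2 : ℂ) * (fderiv ℝ (fderiv ℝ f) p v (Pi.single b 1)
      + I * fderiv ℝ (fderiv ℝ f) p v (Pi.single b I)) := by
  have e : wDbar b f = fun q => (1/2 : ℂ) *
      (dD (Pi.single b 1) f q + I * dD (Pi.single b I) f q) := rfl
  rw [e, dD_const_mul _ ((dD_diff hf _).fun_add ((dD_diff hf _).const_mul I)),
    dD_add (dD_diff hf _) ((dD_diff hf _).const_mul I),
    dD_const_mul I (dD_diff hf _), dD_dD hf, dD_dD hf]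

lemma dD_wD (hf : ContDiffAt ℝ 2 f p) (b : Fin n) :
    dD v (wD b f) p = (1/2 : ℂ) * (fderiv ℝ (fderiv ℝ f) p v (Pi.single b 1)
      - I * fderiv ℝ (fderiv ℝ f) p v (Pi.single b I)) := by
  have e : wD b f = fun q => (1/2 : ℂ) *
      (dD (Pi.single b 1) f q - I * dD (Pi.single b I) f q) := rfl
  rw [e, dD_const_mul _ ((dD_diff hf _).fun_sub ((dD_diff hf _).const_mul I)),
    dD_sub (dD_diff hf _) ((dD_diff hf _).const_mul I),
    dD_const_mul I (dD_diff hf _), dD_dD hf, dD_dD hf]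

lemma wD_wDbar_comm (hf : ContDiffAt ℝ 2 f p) (a b : Fin n) :
    wD a (wDbar b f) p = wDbar b (wD a f) p := by
  have hs : IsSymmSndFDerivAt ℝ f p := hf.isSymmSndFDerivAt (by norm_num)
  rw [wD_eq, wDbar_eq, dD_wDbar hf, dD_wDbar hf, dD_wD hf, dD_wD hf,
    hs (Pi.single a 1) (Pi.single b 1), hs (Pi.single a 1) (Pi.single b I),
    hs (Pi.single a I) (Pi.single b 1), hs (Pi.single a I) (Pi.single b I)]
  ring

lemma wDbar_wDbar_comm (hf : ContDiffAt ℝ 2 f p) (a b : Fin n) :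
    wDbar a (wDbar b f) p = wDbar b (wDbar a f) p := by
  have hs : IsSymmSndFDerivAt ℝ f p := hf.isSymmSndFDerivAt (by norm_num)
  rw [wDbar_eq, wDbar_eq, dD_wDbar hf, dD_wDbar hf, dD_wDbar hf, dD_wDbar hf,
    hs (Pi.single a 1) (Pi.single b 1), hs (Pi.single a 1) (Pi.single b I),
    hs (Pi.single a I) (Pi.single b 1), hs (Pi.single a I) (Pi.single b I)]
  ring

open scoped ContDiff in
lemma contDiffOn_wD {U : Set (Fin n → ℂ)} (hU : IsOpen U)
    (hf : ContDiffOn ℝ ∞ f U) (j : Fin n) : ContDiffOn ℝ ∞ (wD j f) U := by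
  have hD : ContDiffOn ℝ ∞ (fderiv ℝ f) U :=
    ((contDiffOn_infty_iff_fderiv_of_isOpen hU).1 hf).2
  have h1 : ContDiffOn ℝ ∞ (fun q => fderiv ℝ f q (Pi.single j 1)) U :=
    hD.clm_apply contDiffOn_const
  have h2 : ContDiffOn ℝ ∞ (fun q => fderiv ℝ f q (Pi.single j I)) U :=
    hD.clm_apply contDiffOn_const
  exact contDiffOn_const.mul (h1.sub (contDiffOn_const.mul h2))

open scoped ContDiff in
lemma contDiffOn_wDbar {U : Set (Fin n → ℂ)} (hU : IsOpen U)
    (hf : ContDiffOn ℝ ∞ f U) (j : Fin n) : ContDiffOn ℝ ∞ (wDbar j f) U := by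
  have hD : ContDiffOn ℝ ∞ (fderiv ℝ f) U :=
    ((contDiffOn_infty_iff_fderiv_of_isOpen hU).1 hf).2
  have h1 : ContDiffOn ℝ ∞ (fun q => fderiv ℝ f q (Pi.single j 1)) U :=
    hD.clm_apply contDiffOn_const
  have h2 : ContDiffOn ℝ ∞ (fun q => fderiv ℝ f q (Pi.single j I)) U :=
    hD.clm_apply contDiffOn_const
  exact contDiffOn_const.mul (h1.add (contDiffOn_const.mul h2))

end CHTools
end

noncomputable section
namespace CHMain
open CHTools Complex
open scoped ContDiff

lemma one_le_inf : (1 : WithTop ℕ∞) ≤ ∞ := by decide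
lemma two_le_inf : (2 : WithTop ℕ∞) ≤ ∞ := by decide

variable {d : ℕ}

def front (d : ℕ) : (Fin (d+1) → ℂ) →L[ℝ] (Fin d → ℂ) :=
  ContinuousLinearMap.pi fun i => ContinuousLinearMap.proj i.castSucc

lemma front_apply (p : Fin (d+1) → ℂ) : front d p = fun i => p i.castSucc := rfl

lemma front_snoc (z : Fin d → ℂ) (w : ℂ) : front d (Fin.snoc z w) = z := by
  funext i
  show (Fin.snoc z w : Fin (d+1) → ℂ) i.castSucc = z i
  rw [Fin.snoc_castSucc]

lemma front_single_cast (j : Fin d) (c : ℂ) :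
    front d (Pi.single j.castSucc c) = Pi.single j c := by
  funext i
  show (Pi.single j.castSucc c : Fin (d+1) → ℂ) i.castSucc = (Pi.single j c : Fin d → ℂ) i
  by_cases h : i = j
  · subst h; rw [Pi.single_eq_same, Pi.single_eq_same]
  · rw [Pi.single_eq_of_ne (fun hc => h (Fin.castSucc_injective d hc)), Pi.single_eq_of_ne h]

lemma front_single_last (c : ℂ) : front d (Pi.single (Fin.last d) c) = 0 := by
  funext i
  show (Pi.single (Fin.last d) c : Fin (d+1) → ℂ) i.castSucc = 0
  rw [Pi.single_eq_of_ne (Fin.castSucc_lt_last i).ne]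

def Wf (d : ℕ) : (Fin (d+1) → ℂ) → ℂ := fun p => p (Fin.last d)
def Wbf (d : ℕ) : (Fin (d+1) → ℂ) → ℂ := fun p => starRingEnd ℂ (p (Fin.last d))

variable {μ : ℝ} {N : (Fin d → ℂ) → ℝ} {Ω : Set (Fin d → ℂ)}

def Af (d : ℕ) (μ : ℝ) (N : (Fin d → ℂ) → ℝ) : (Fin (d+1) → ℂ) → ℂ :=
  fun p => NmuC d μ N (front d p)

def Gf (d : ℕ) (μ : ℝ) (N : (Fin d → ℂ) → ℝ) : (Fin (d+1) → ℂ) → ℂ :=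
  fun p => Af d μ N p - Wf d p * Wbf d p

def Gif (d : ℕ) (μ : ℝ) (N : (Fin d → ℂ) → ℝ) : (Fin (d+1) → ℂ) → ℂ :=
  fun p => (Gf d μ N p)⁻¹

def UU (d : ℕ) (μ : ℝ) (N : (Fin d → ℂ) → ℝ) (Ω : Set (Fin d → ℂ)) : Set (Fin (d+1) → ℂ) :=
  (front d ⁻¹' Ω) ∩ {p | ‖p (Fin.last d)‖ ^ 2 < N (front d p) ^ μ}

lemma UU_sub : UU d μ N Ω ⊆ front d ⁻¹' Ω := Set.inter_subset_left

lemma isOpen_V (hΩ : IsOpen Ω) : IsOpen (front d ⁻¹' Ω : Set (Fin (d+1) → ℂ)) :=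
  hΩ.preimage (front d).continuous

lemma isOpen_UU (hΩ : IsOpen Ω) (hNsm : ContDiffOn ℝ (⊤ : ℕ∞) N Ω) (hμ : 0 < μ) :
    IsOpen (UU d μ N Ω) := by
  have hV : IsOpen (front d ⁻¹' Ω : Set (Fin (d+1) → ℂ)) := isOpen_V hΩ
  have hcont : ContinuousOn
      (fun p : Fin (d+1) → ℂ => N (front d p) ^ μ - ‖p (Fin.last d)‖ ^ 2)
      (front d ⁻¹' Ω) := by
    apply ContinuousOn.fun_sub
    · exact (hNsm.continuousOn.comp (front d).continuous.continuousOn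
        (Set.mapsTo_preimage _ _)).rpow_const (fun p _ => Or.inr hμ.le)
    · exact ((continuous_norm.comp (continuous_apply (Fin.last d))).pow 2).continuousOn
  have he : UU d μ N Ω = (front d ⁻¹' Ω) ∩
      ((fun p : Fin (d+1) → ℂ => N (front d p) ^ μ - ‖p (Fin.last d)‖ ^ 2) ⁻¹'
        Set.Ioi 0) := by
    ext p
    simp only [UU, Set.mem_inter_iff, Set.mem_setOf_eq, Set.mem_preimage, Set.mem_Ioi, sub_pos]
  rw [he]
  exact hcont.isOpen_inter_preimage hV isOpen_Ioi

lemma smooth_NmuC (hNsm : ContDiffOn ℝ (⊤ : ℕ∞) N Ω) (hNpos : ∀ z ∈ Ω, 0 < N z) :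
    ContDiffOn ℝ ∞ (NmuC d μ N) Ω := by
  have h1 : ContDiffOn ℝ ∞ (fun z => N z ^ μ) Ω :=
    (hNsm.of_le (by simp)).rpow_const_of_ne (fun z hz => (hNpos z hz).ne')
  exact Complex.ofRealCLM.contDiff.comp_contDiffOn h1

lemma smooth_A (hNsm : ContDiffOn ℝ (⊤ : ℕ∞) N Ω) (hNpos : ∀ z ∈ Ω, 0 < N z) :
    ContDiffOn ℝ ∞ (Af d μ N) (front d ⁻¹' Ω) :=
  (smooth_NmuC hNsm hNpos).comp (front d).contDiff.contDiffOn (Set.mapsTo_preimage _ _)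

lemma smooth_W : ContDiff ℝ ∞ (Wf d) :=
  (ContinuousLinearMap.proj (R := ℝ) (φ := fun _ : Fin (d+1) => ℂ) (Fin.last d)).contDiff

lemma smooth_Wb : ContDiff ℝ ∞ (Wbf d) := by
  have : Wbf d = fun p : Fin (d+1) → ℂ => Complex.conjCLE (p (Fin.last d)) := rfl
  rw [this]
  exact Complex.conjCLE.contDiff.comp smooth_W

lemma smooth_G (hNsm : ContDiffOn ℝ (⊤ : ℕ∞) N Ω) (hNpos : ∀ z ∈ Ω, 0 < N z) :
    ContDiffOn ℝ ∞ (Gf d μ N) (front d ⁻¹' Ω) :=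
  (smooth_A hNsm hNpos).sub (smooth_W.contDiffOn.mul smooth_Wb.contDiffOn)

lemma G_eq (p : Fin (d+1) → ℂ) :
    Gf d μ N p = ((N (front d p) ^ μ - ‖p (Fin.last d)‖ ^ 2 : ℝ) : ℂ) := by
  unfold Gf Af Wf Wbf NmuC
  rw [Complex.ofReal_sub]
  congr 1
  rw [Complex.mul_conj, Complex.sq_norm]

lemma G_pos {p : Fin (d+1) → ℂ} (hp : p ∈ UU d μ N Ω) :
    0 < N (front d p) ^ μ - ‖p (Fin.last d)‖ ^ 2 := sub_pos.2 hp.2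

lemma G_ne {p : Fin (d+1) → ℂ} (hp : p ∈ UU d μ N Ω) : Gf d μ N p ≠ 0 := by
  rw [G_eq]
  exact_mod_cast (G_pos hp).ne'

lemma G_slit {p : Fin (d+1) → ℂ} (hp : p ∈ UU d μ N Ω) : Gf d μ N p ∈ Complex.slitPlane := by
  rw [G_eq]
  exact Or.inl (by rw [Complex.ofReal_re]; exact G_pos hp)

lemma smooth_Gi (hNsm : ContDiffOn ℝ (⊤ : ℕ∞) N Ω) (hNpos : ∀ z ∈ Ω, 0 < N z) :
    ContDiffOn ℝ ∞ (Gif d μ N) (UU d μ N Ω) :=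
  ((smooth_G hNsm hNpos).mono UU_sub).inv (fun _ hp => G_ne hp)

lemma dAt {n : ℕ} {S : Set (Fin n → ℂ)} {f : (Fin n → ℂ) → ℂ} {p : Fin n → ℂ}
    (hS : IsOpen S) (hf : ContDiffOn ℝ ∞ f S) (hp : p ∈ S) : DifferentiableAt ℝ f p :=
  (hf.differentiableOn (ne_of_gt (zero_lt_one.trans_le one_le_inf))).differentiableAt (hS.mem_nhds hp)

lemma cAt2 {n : ℕ} {S : Set (Fin n → ℂ)} {f : (Fin n → ℂ) → ℂ} {p : Fin n → ℂ}
    (hS : IsOpen S) (hf : ContDiffOn ℝ ∞ f S) (hp : p ∈ S) : ContDiffAt ℝ 2 f p :=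
  (hf.contDiffAt (hS.mem_nhds hp)).of_le two_le_inf

lemma wD_congrU {n : ℕ} {S : Set (Fin n → ℂ)} {f g : (Fin n → ℂ) → ℂ} {p : Fin n → ℂ}
    {j : Fin n} (hS : IsOpen S) (hp : p ∈ S) (h : ∀ q ∈ S, f q = g q) :
    wD j f p = wD j g p :=
  wD_congr (Filter.eventuallyEq_of_mem (hS.mem_nhds hp) h)

lemma wDbar_congrU {n : ℕ} {S : Set (Fin n → ℂ)} {f g : (Fin n → ℂ) → ℂ} {p : Fin n → ℂ}
    {j : Fin n} (hS : IsOpen S) (hp : p ∈ S) (h : ∀ q ∈ S, f q = g q) :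
    wDbar j f p = wDbar j g p :=
  wDbar_congr (Filter.eventuallyEq_of_mem (hS.mem_nhds hp) h)

lemma dD_zero {n : ℕ} {f : (Fin n → ℂ) → ℂ} {p : Fin n → ℂ} : dD 0 f p = 0 :=
  (fderiv ℝ f p).map_zero

lemma wD_pull_cast {f : (Fin d → ℂ) → ℂ} {p : Fin (d+1) → ℂ}
    (hf : DifferentiableAt ℝ f (front d p)) (j : Fin d) :
    wD j.castSucc (fun q => f (front d q)) p = wD j f (front d p) := by
  rw [wD_eq, wD_eq, dD_clm (front d) hf, dD_clm (front d) hf,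
    front_single_cast, front_single_cast]

lemma wDbar_pull_cast {f : (Fin d → ℂ) → ℂ} {p : Fin (d+1) → ℂ}
    (hf : DifferentiableAt ℝ f (front d p)) (j : Fin d) :
    wDbar j.castSucc (fun q => f (front d q)) p = wDbar j f (front d p) := by
  rw [wDbar_eq, wDbar_eq, dD_clm (front d) hf, dD_clm (front d) hf,
    front_single_cast, front_single_cast]

lemma wD_pull_last {f : (Fin d → ℂ) → ℂ} {p : Fin (d+1) → ℂ}
    (hf : DifferentiableAt ℝ f (front d p)) :
    wD (Fin.last d) (fun q => f (front d q)) p = 0 := by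
  rw [wD_eq, dD_clm (front d) hf, dD_clm (front d) hf, front_single_last, front_single_last,
    dD_zero]
  ring

lemma wDbar_pull_last {f : (Fin d → ℂ) → ℂ} {p : Fin (d+1) → ℂ}
    (hf : DifferentiableAt ℝ f (front d p)) :
    wDbar (Fin.last d) (fun q => f (front d q)) p = 0 := by
  rw [wDbar_eq, dD_clm (front d) hf, dD_clm (front d) hf, front_single_last, front_single_last,
    dD_zero]
  ring


-- coordinate derivative lemmas
lemma wD_W_last {p : Fin (d+1) → ℂ} : wD (Fin.last d) (Wf d) p = 1 := by
  unfold Wf; rw [wD_coord, if_pos rfl]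

lemma wD_W_cast {p : Fin (d+1) → ℂ} (j : Fin d) : wD j.castSucc (Wf d) p = 0 := by
  unfold Wf; rw [wD_coord, if_neg (Ne.symm (Fin.castSucc_lt_last j).ne)]

lemma wDbar_W {p : Fin (d+1) → ℂ} (j : Fin (d+1)) : wDbar j (Wf d) p = 0 := by
  unfold Wf; rw [wDbar_coord]

lemma wD_Wb {p : Fin (d+1) → ℂ} (j : Fin (d+1)) : wD j (Wbf d) p = 0 := by
  unfold Wbf; rw [wD_conj_coord]

lemma wDbar_Wb_last {p : Fin (d+1) → ℂ} : wDbar (Fin.last d) (Wbf d) p = 1 := by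
  unfold Wbf; rw [wDbar_conj_coord, if_pos rfl]

lemma wDbar_Wb_cast {p : Fin (d+1) → ℂ} (j : Fin d) : wDbar j.castSucc (Wbf d) p = 0 := by
  unfold Wbf; rw [wDbar_conj_coord, if_neg (Ne.symm (Fin.castSucc_lt_last j).ne)]

section Derivs

lemma smooth_pull {f : (Fin d → ℂ) → ℂ} (hf : ContDiffOn ℝ ∞ f Ω) :
    ContDiffOn ℝ ∞ (fun q => f (front d q)) (front d ⁻¹' Ω) :=
  hf.comp (front d).contDiff.contDiffOn (Set.mapsTo_preimage _ _)

lemma diff_pull (hΩ : IsOpen Ω) {f : (Fin d → ℂ) → ℂ} {p : Fin (d+1) → ℂ}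
    (hf : ContDiffOn ℝ ∞ f Ω) (hp : p ∈ front d ⁻¹' Ω) :
    DifferentiableAt ℝ (fun q => f (front d q)) p :=
  dAt (isOpen_V hΩ) (smooth_pull hf) hp

lemma diff_W {p : Fin (d+1) → ℂ} : DifferentiableAt ℝ (Wf d) p :=
  (smooth_W.differentiable (ne_of_gt (zero_lt_one.trans_le one_le_inf))).differentiableAt

lemma diff_Wb {p : Fin (d+1) → ℂ} : DifferentiableAt ℝ (Wbf d) p :=
  (smooth_Wb.differentiable (ne_of_gt (zero_lt_one.trans_le one_le_inf))).differentiableAt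

lemma diff_A (hΩ : IsOpen Ω) (hNsm : ContDiffOn ℝ (⊤ : ℕ∞) N Ω) (hNpos : ∀ z ∈ Ω, 0 < N z) {p : Fin (d+1) → ℂ} (hp : p ∈ front d ⁻¹' Ω) :
    DifferentiableAt ℝ (Af d μ N) p :=
  dAt (isOpen_V hΩ) (smooth_A hNsm hNpos) hp

lemma diff_G (hΩ : IsOpen Ω) (hNsm : ContDiffOn ℝ (⊤ : ℕ∞) N Ω) (hNpos : ∀ z ∈ Ω, 0 < N z) {p : Fin (d+1) → ℂ} (hp : p ∈ front d ⁻¹' Ω) :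
    DifferentiableAt ℝ (Gf d μ N) p :=
  dAt (isOpen_V hΩ) (smooth_G hNsm hNpos) hp

lemma diff_Gi (hΩ : IsOpen Ω) (hNsm : ContDiffOn ℝ (⊤ : ℕ∞) N Ω) (hNpos : ∀ z ∈ Ω, 0 < N z) (hμ : 0 < μ) {p : Fin (d+1) → ℂ} (hp : p ∈ UU d μ N Ω) :
    DifferentiableAt ℝ (Gif d μ N) p :=
  dAt (isOpen_UU hΩ hNsm hμ) (smooth_Gi hNsm hNpos) hp

lemma wDG_cast (hΩ : IsOpen Ω) (hNsm : ContDiffOn ℝ (⊤ : ℕ∞) N Ω) (hNpos : ∀ z ∈ Ω, 0 < N z) {p : Fin (d+1) → ℂ} (hp : p ∈ front d ⁻¹' Ω) (j : Fin d) :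
    wD j.castSucc (Gf d μ N) p = wD j (NmuC d μ N) (front d p) := by
  unfold Gf
  rw [wD_sub (diff_A hΩ hNsm hNpos hp) (diff_W.fun_mul diff_Wb),
    wD_mul diff_W diff_Wb, wD_W_cast, wD_Wb]
  have : wD j.castSucc (Af d μ N) p = wD j (NmuC d μ N) (front d p) :=
    wD_pull_cast (dAt hΩ (smooth_NmuC hNsm hNpos) hp) j
  rw [this]; ring

lemma wDG_last (hΩ : IsOpen Ω) (hNsm : ContDiffOn ℝ (⊤ : ℕ∞) N Ω) (hNpos : ∀ z ∈ Ω, 0 < N z) {p : Fin (d+1) → ℂ} (hp : p ∈ front d ⁻¹' Ω) :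
    wD (Fin.last d) (Gf d μ N) p = -(Wbf d p) := by
  unfold Gf
  rw [wD_sub (diff_A hΩ hNsm hNpos hp) (diff_W.fun_mul diff_Wb),
    wD_mul diff_W diff_Wb, wD_W_last, wD_Wb]
  have : wD (Fin.last d) (Af d μ N) p = 0 :=
    wD_pull_last (dAt hΩ (smooth_NmuC hNsm hNpos) hp)
  rw [this]; ring

lemma wDbarG_cast (hΩ : IsOpen Ω) (hNsm : ContDiffOn ℝ (⊤ : ℕ∞) N Ω) (hNpos : ∀ z ∈ Ω, 0 < N z) {p : Fin (d+1) → ℂ} (hp : p ∈ front d ⁻¹' Ω) (k : Fin d) :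
    wDbar k.castSucc (Gf d μ N) p = wDbar k (NmuC d μ N) (front d p) := by
  unfold Gf
  rw [wDbar_sub (diff_A hΩ hNsm hNpos hp) (diff_W.fun_mul diff_Wb),
    wDbar_mul diff_W diff_Wb, wDbar_W, wDbar_Wb_cast]
  have : wDbar k.castSucc (Af d μ N) p = wDbar k (NmuC d μ N) (front d p) :=
    wDbar_pull_cast (dAt hΩ (smooth_NmuC hNsm hNpos) hp) k
  rw [this]; ring

lemma wDbarG_last (hΩ : IsOpen Ω) (hNsm : ContDiffOn ℝ (⊤ : ℕ∞) N Ω) (hNpos : ∀ z ∈ Ω, 0 < N z) {p : Fin (d+1) → ℂ} (hp : p ∈ front d ⁻¹' Ω) :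
    wDbar (Fin.last d) (Gf d μ N) p = -(Wf d p) := by
  unfold Gf
  rw [wDbar_sub (diff_A hΩ hNsm hNpos hp) (diff_W.fun_mul diff_Wb),
    wDbar_mul diff_W diff_Wb, wDbar_W, wDbar_Wb_last]
  have : wDbar (Fin.last d) (Af d μ N) p = 0 :=
    wDbar_pull_last (dAt hΩ (smooth_NmuC hNsm hNpos) hp)
  rw [this]; ring

lemma wDGi_cast (hΩ : IsOpen Ω) (hNsm : ContDiffOn ℝ (⊤ : ℕ∞) N Ω) (hNpos : ∀ z ∈ Ω, 0 < N z) {p : Fin (d+1) → ℂ} (hp : p ∈ UU d μ N Ω) (j : Fin d) :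
    wD j.castSucc (Gif d μ N) p
      = -(Gif d μ N p * Gif d μ N p) * wD j (NmuC d μ N) (front d p) := by
  unfold Gif
  rw [wD_inv (diff_G hΩ hNsm hNpos (UU_sub hp)) (G_ne hp),
    wDG_cast hΩ hNsm hNpos (UU_sub hp)]

lemma wDGi_last (hΩ : IsOpen Ω) (hNsm : ContDiffOn ℝ (⊤ : ℕ∞) N Ω) (hNpos : ∀ z ∈ Ω, 0 < N z) {p : Fin (d+1) → ℂ} (hp : p ∈ UU d μ N Ω) :
    wD (Fin.last d) (Gif d μ N) p = Gif d μ N p * Gif d μ N p * Wbf d p := by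
  unfold Gif
  rw [wD_inv (diff_G hΩ hNsm hNpos (UU_sub hp)) (G_ne hp),
    wDG_last hΩ hNsm hNpos (UU_sub hp)]
  ring

lemma wDbarGi_cast (hΩ : IsOpen Ω) (hNsm : ContDiffOn ℝ (⊤ : ℕ∞) N Ω) (hNpos : ∀ z ∈ Ω, 0 < N z) {p : Fin (d+1) → ℂ} (hp : p ∈ UU d μ N Ω) (k : Fin d) :
    wDbar k.castSucc (Gif d μ N) p
      = -(Gif d μ N p * Gif d μ N p) * wDbar k (NmuC d μ N) (front d p) := by
  unfold Gif
  rw [wDbar_inv (diff_G hΩ hNsm hNpos (UU_sub hp)) (G_ne hp),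
    wDbarG_cast hΩ hNsm hNpos (UU_sub hp)]

lemma wDbarGi_last (hΩ : IsOpen Ω) (hNsm : ContDiffOn ℝ (⊤ : ℕ∞) N Ω) (hNpos : ∀ z ∈ Ω, 0 < N z) {p : Fin (d+1) → ℂ} (hp : p ∈ UU d μ N Ω) :
    wDbar (Fin.last d) (Gif d μ N) p = Gif d μ N p * Gif d μ N p * Wf d p := by
  unfold Gif
  rw [wDbar_inv (diff_G hΩ hNsm hNpos (UU_sub hp)) (G_ne hp),
    wDbarG_last hΩ hNsm hNpos (UU_sub hp)]
  ring

lemma CHpot_eqU : ∀ p ∈ UU d μ N Ω, CHpot d μ N p = -Complex.log (Gf d μ N p) := by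
  intro p hp
  show -(((Real.log (N (front d p) ^ μ - ‖p (Fin.last d)‖ ^ 2)) : ℂ))
      = -Complex.log (Gf d μ N p)
  rw [Complex.ofReal_log (G_pos hp).le, ← G_eq]

lemma pot_bar_cast (hΩ : IsOpen Ω) (hNsm : ContDiffOn ℝ (⊤ : ℕ∞) N Ω) (hNpos : ∀ z ∈ Ω, 0 < N z) (hμ : 0 < μ) (k : Fin d) : ∀ p ∈ UU d μ N Ω,
    wDbar k.castSucc (CHpot d μ N) p
      = -(Gif d μ N p * wDbar k (NmuC d μ N) (front d p)) := by
  intro p hp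
  rw [wDbar_congrU (isOpen_UU hΩ hNsm hμ) hp CHpot_eqU]
  have e1 : wDbar k.castSucc (fun q => -Complex.log (Gf d μ N q)) p
      = -wDbar k.castSucc (fun q => Complex.log (Gf d μ N q)) p := wDbar_neg
  rw [e1, wDbar_comp_holo (Complex.differentiableAt_log (G_slit hp))
      (diff_G hΩ hNsm hNpos (UU_sub hp)),
    (Complex.hasDerivAt_log (G_slit hp)).deriv, wDbarG_cast hΩ hNsm hNpos (UU_sub hp)]
  unfold Gif; ring

lemma pot_bar_last (hΩ : IsOpen Ω) (hNsm : ContDiffOn ℝ (⊤ : ℕ∞) N Ω) (hNpos : ∀ z ∈ Ω, 0 < N z) (hμ : 0 < μ) : ∀ p ∈ UU d μ N Ω,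
    wDbar (Fin.last d) (CHpot d μ N) p = Gif d μ N p * Wf d p := by
  intro p hp
  rw [wDbar_congrU (isOpen_UU hΩ hNsm hμ) hp CHpot_eqU]
  have e1 : wDbar (Fin.last d) (fun q => -Complex.log (Gf d μ N q)) p
      = -wDbar (Fin.last d) (fun q => Complex.log (Gf d μ N q)) p := wDbar_neg
  rw [e1, wDbar_comp_holo (Complex.differentiableAt_log (G_slit hp))
      (diff_G hΩ hNsm hNpos (UU_sub hp)),
    (Complex.hasDerivAt_log (G_slit hp)).deriv, wDbarG_last hΩ hNsm hNpos (UU_sub hp)]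
  unfold Gif; ring

end Derivs


lemma gCH_cc (hΩ : IsOpen Ω) (hNsm : ContDiffOn ℝ (⊤ : ℕ∞) N Ω) (hNpos : ∀ z ∈ Ω, 0 < N z) (hμ : 0 < μ) (j k : Fin d) : ∀ p ∈ UU d μ N Ω,
    gCH d μ N j.castSucc k.castSucc p
      = Gif d μ N p * Gif d μ N p *
          (wD j (NmuC d μ N) (front d p) * wDbar k (NmuC d μ N) (front d p))
        - Gif d μ N p * wD j (wDbar k (NmuC d μ N)) (front d p) := by
  intro p hp
  have hUo := isOpen_UU hΩ hNsm hμ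
  have hGi := diff_Gi hΩ hNsm hNpos hμ hp
  have hsk := contDiffOn_wDbar hΩ (smooth_NmuC (μ := μ) hNsm hNpos) k
  have hPk : DifferentiableAt ℝ (fun q => wDbar k (NmuC d μ N) (front d q)) p :=
    diff_pull hΩ hsk hp.1
  have e0 : gCH d μ N j.castSucc k.castSucc p
      = wD j.castSucc (fun q => -(Gif d μ N q * wDbar k (NmuC d μ N) (front d q))) p :=
    wD_congrU hUo hp (pot_bar_cast hΩ hNsm hNpos hμ k)
  have e1 : wD j.castSucc (fun q => -(Gif d μ N q * wDbar k (NmuC d μ N) (front d q))) p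
      = -wD j.castSucc (fun q => Gif d μ N q * wDbar k (NmuC d μ N) (front d q)) p := wD_neg
  rw [e0, e1, wD_mul hGi hPk, wDGi_cast hΩ hNsm hNpos hp j,
    wD_pull_cast (dAt hΩ hsk hp.1) j]
  ring

lemma gCH_cl (hΩ : IsOpen Ω) (hNsm : ContDiffOn ℝ (⊤ : ℕ∞) N Ω) (hNpos : ∀ z ∈ Ω, 0 < N z) (hμ : 0 < μ) (j : Fin d) : ∀ p ∈ UU d μ N Ω,
    gCH d μ N j.castSucc (Fin.last d) p
      = -(Gif d μ N p * Gif d μ N p * wD j (NmuC d μ N) (front d p) * Wf d p) := by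
  intro p hp
  have hUo := isOpen_UU hΩ hNsm hμ
  have hGi := diff_Gi hΩ hNsm hNpos hμ hp
  have e0 : gCH d μ N j.castSucc (Fin.last d) p
      = wD j.castSucc (fun q => Gif d μ N q * Wf d q) p :=
    wD_congrU hUo hp (pot_bar_last hΩ hNsm hNpos hμ)
  rw [e0, wD_mul hGi diff_W, wDGi_cast hΩ hNsm hNpos hp j, wD_W_cast]
  ring

lemma gCH_lc (hΩ : IsOpen Ω) (hNsm : ContDiffOn ℝ (⊤ : ℕ∞) N Ω) (hNpos : ∀ z ∈ Ω, 0 < N z) (hμ : 0 < μ) (k : Fin d) : ∀ p ∈ UU d μ N Ω,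
    gCH d μ N (Fin.last d) k.castSucc p
      = -(Gif d μ N p * Gif d μ N p * Wbf d p * wDbar k (NmuC d μ N) (front d p)) := by
  intro p hp
  have hUo := isOpen_UU hΩ hNsm hμ
  have hGi := diff_Gi hΩ hNsm hNpos hμ hp
  have hsk := contDiffOn_wDbar hΩ (smooth_NmuC (μ := μ) hNsm hNpos) k
  have hPk : DifferentiableAt ℝ (fun q => wDbar k (NmuC d μ N) (front d q)) p :=
    diff_pull hΩ hsk hp.1
  have e0 : gCH d μ N (Fin.last d) k.castSucc p
      = wD (Fin.last d) (fun q => -(Gif d μ N q * wDbar k (NmuC d μ N) (front d q))) p :=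
    wD_congrU hUo hp (pot_bar_cast hΩ hNsm hNpos hμ k)
  have e1 : wD (Fin.last d) (fun q => -(Gif d μ N q * wDbar k (NmuC d μ N) (front d q))) p
      = -wD (Fin.last d) (fun q => Gif d μ N q * wDbar k (NmuC d μ N) (front d q)) p := wD_neg
  rw [e0, e1, wD_mul hGi hPk, wDGi_last hΩ hNsm hNpos hp,
    wD_pull_last (dAt hΩ hsk hp.1)]
  ring

lemma gCH_ll (hΩ : IsOpen Ω) (hNsm : ContDiffOn ℝ (⊤ : ℕ∞) N Ω) (hNpos : ∀ z ∈ Ω, 0 < N z) (hμ : 0 < μ) : ∀ p ∈ UU d μ N Ω,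
    gCH d μ N (Fin.last d) (Fin.last d) p
      = Gif d μ N p + Gif d μ N p * Gif d μ N p * Wf d p * Wbf d p := by
  intro p hp
  have hUo := isOpen_UU hΩ hNsm hμ
  have hGi := diff_Gi hΩ hNsm hNpos hμ hp
  have e0 : gCH d μ N (Fin.last d) (Fin.last d) p
      = wD (Fin.last d) (fun q => Gif d μ N q * Wf d q) p :=
    wD_congrU hUo hp (pot_bar_last hΩ hNsm hNpos hμ)
  rw [e0, wD_mul hGi diff_W, wDGi_last hΩ hNsm hNpos hp, wD_W_last]
  ring


section Stage3
variable {p : Fin (d+1) → ℂ}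

lemma S3a (hΩ : IsOpen Ω) (hNsm : ContDiffOn ℝ (⊤ : ℕ∞) N Ω) (hNpos : ∀ z ∈ Ω, 0 < N z) (hμ : 0 < μ) (j k : Fin d) : ∀ p ∈ UU d μ N Ω,
    wD k.castSucc (gCH d μ N (Fin.last d) j.castSucc) p
      = 2 * (Gif d μ N p * Gif d μ N p * Gif d μ N p) * wD k (NmuC d μ N) (front d p) *
          Wbf d p * wDbar j (NmuC d μ N) (front d p)
        - (Gif d μ N p * Gif d μ N p) * Wbf d p * wD k (wDbar j (NmuC d μ N)) (front d p) := by
  intro p hp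
  have hUo := isOpen_UU hΩ hNsm hμ
  have hGi := diff_Gi hΩ hNsm hNpos hμ hp
  have hsjb := contDiffOn_wDbar hΩ (smooth_NmuC (μ := μ) hNsm hNpos) j
  have hPjb : DifferentiableAt ℝ (fun q => wDbar j (NmuC d μ N) (front d q)) p :=
    diff_pull hΩ hsjb hp.1
  have e0 : wD k.castSucc (gCH d μ N (Fin.last d) j.castSucc) p
      = wD k.castSucc
          (fun q => -(Gif d μ N q * Gif d μ N q * Wbf d q *
            wDbar j (NmuC d μ N) (front d q))) p :=
    wD_congrU hUo hp (gCH_lc hΩ hNsm hNpos hμ j)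
  have e1 : wD k.castSucc
        (fun q => -(Gif d μ N q * Gif d μ N q * Wbf d q *
          wDbar j (NmuC d μ N) (front d q))) p
      = -wD k.castSucc
          (fun q => Gif d μ N q * Gif d μ N q * Wbf d q *
            wDbar j (NmuC d μ N) (front d q)) p := wD_neg
  rw [e0, e1, wD_mul ((hGi.fun_mul hGi).fun_mul diff_Wb) hPjb,
    wD_mul (hGi.fun_mul hGi) diff_Wb, wD_mul hGi hGi,
    wDGi_cast hΩ hNsm hNpos hp k, wD_Wb,
    wD_pull_cast (dAt hΩ hsjb hp.1) k]
  ring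

lemma S3b (hΩ : IsOpen Ω) (hNsm : ContDiffOn ℝ (⊤ : ℕ∞) N Ω) (hNpos : ∀ z ∈ Ω, 0 < N z) (hμ : 0 < μ) (j l : Fin d) : ∀ p ∈ UU d μ N Ω,
    wD l.castSucc (gCH d μ N j.castSucc (Fin.last d)) p
      = 2 * (Gif d μ N p * Gif d μ N p * Gif d μ N p) * wD l (NmuC d μ N) (front d p) *
          wD j (NmuC d μ N) (front d p) * Wf d p
        - (Gif d μ N p * Gif d μ N p) * wD l (wD j (NmuC d μ N)) (front d p) * Wf d p := by
  intro p hp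
  have hUo := isOpen_UU hΩ hNsm hμ
  have hGi := diff_Gi hΩ hNsm hNpos hμ hp
  have hsj := contDiffOn_wD hΩ (smooth_NmuC (μ := μ) hNsm hNpos) j
  have hPj : DifferentiableAt ℝ (fun q => wD j (NmuC d μ N) (front d q)) p :=
    diff_pull hΩ hsj hp.1
  have e0 : wD l.castSucc (gCH d μ N j.castSucc (Fin.last d)) p
      = wD l.castSucc
          (fun q => -(Gif d μ N q * Gif d μ N q * wD j (NmuC d μ N) (front d q) * Wf d q)) p :=
    wD_congrU hUo hp (gCH_cl hΩ hNsm hNpos hμ j)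
  have e1 : wD l.castSucc
        (fun q => -(Gif d μ N q * Gif d μ N q * wD j (NmuC d μ N) (front d q) * Wf d q)) p
      = -wD l.castSucc
          (fun q => Gif d μ N q * Gif d μ N q * wD j (NmuC d μ N) (front d q) * Wf d q) p :=
    wD_neg
  rw [e0, e1, wD_mul ((hGi.fun_mul hGi).fun_mul hPj) diff_W,
    wD_mul (hGi.fun_mul hGi) hPj, wD_mul hGi hGi,
    wDGi_cast hΩ hNsm hNpos hp l, wD_W_cast,
    wD_pull_cast (dAt hΩ hsj hp.1) l]
  ring

lemma S3c (hΩ : IsOpen Ω) (hNsm : ContDiffOn ℝ (⊤ : ℕ∞) N Ω) (hNpos : ∀ z ∈ Ω, 0 < N z) (hμ : 0 < μ) : ∀ p ∈ UU d μ N Ω,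
    wD (Fin.last d) (gCH d μ N (Fin.last d) (Fin.last d)) p
      = 2 * (Gif d μ N p * Gif d μ N p) * Wbf d p
        + 2 * (Gif d μ N p * Gif d μ N p * Gif d μ N p) * Wf d p * Wbf d p * Wbf d p := by
  intro p hp
  have hUo := isOpen_UU hΩ hNsm hμ
  have hGi := diff_Gi hΩ hNsm hNpos hμ hp
  have e0 : wD (Fin.last d) (gCH d μ N (Fin.last d) (Fin.last d)) p
      = wD (Fin.last d)
          (fun q => Gif d μ N q + Gif d μ N q * Gif d μ N q * Wf d q * Wbf d q) p :=
    wD_congrU hUo hp (gCH_ll hΩ hNsm hNpos hμ)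
  rw [e0, wD_add hGi (((hGi.fun_mul hGi).fun_mul diff_W).fun_mul diff_Wb),
    wD_mul ((hGi.fun_mul hGi).fun_mul diff_W) diff_Wb,
    wD_mul (hGi.fun_mul hGi) diff_W, wD_mul hGi hGi,
    wDGi_last hΩ hNsm hNpos hp, wD_Wb, wD_W_last]
  ring

lemma S3d (hΩ : IsOpen Ω) (hNsm : ContDiffOn ℝ (⊤ : ℕ∞) N Ω) (hNpos : ∀ z ∈ Ω, 0 < N z) (hμ : 0 < μ) (l : Fin d) : ∀ p ∈ UU d μ N Ω,
    wD l.castSucc (gCH d μ N (Fin.last d) (Fin.last d)) p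
      = -(Gif d μ N p * Gif d μ N p) * wD l (NmuC d μ N) (front d p)
        - 2 * (Gif d μ N p * Gif d μ N p * Gif d μ N p) * wD l (NmuC d μ N) (front d p) *
            Wf d p * Wbf d p := by
  intro p hp
  have hUo := isOpen_UU hΩ hNsm hμ
  have hGi := diff_Gi hΩ hNsm hNpos hμ hp
  have e0 : wD l.castSucc (gCH d μ N (Fin.last d) (Fin.last d)) p
      = wD l.castSucc
          (fun q => Gif d μ N q + Gif d μ N q * Gif d μ N q * Wf d q * Wbf d q) p :=
    wD_congrU hUo hp (gCH_ll hΩ hNsm hNpos hμ)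
  rw [e0, wD_add hGi (((hGi.fun_mul hGi).fun_mul diff_W).fun_mul diff_Wb),
    wD_mul ((hGi.fun_mul hGi).fun_mul diff_W) diff_Wb,
    wD_mul (hGi.fun_mul hGi) diff_W, wD_mul hGi hGi,
    wDGi_cast hΩ hNsm hNpos hp l, wD_Wb, wD_W_cast]
  ring

end Stage3


section Eval
variable {w : ℂ}

lemma p0_mem (h0 : (0 : Fin d → ℂ) ∈ Ω) (hN0 : N 0 = 1) (hw : ‖w‖ < 1) :
    Fin.snoc (0 : Fin d → ℂ) w ∈ UU d μ N Ω := by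
  constructor
  · show front d _ ∈ Ω
    rw [front_snoc]; exact h0
  · show ‖(Fin.snoc (0 : Fin d → ℂ) w : Fin (d+1) → ℂ) (Fin.last d)‖ ^ 2
      < N (front d (Fin.snoc (0 : Fin d → ℂ) w)) ^ μ
    rw [Fin.snoc_last, front_snoc, hN0, Real.one_rpow]
    exact pow_lt_one₀ (norm_nonneg w) hw (by norm_num)

lemma val1 
    (hHol : ∀ L : List (Fin d), L ≠ [] → L.foldr (fun j f => wD j f) (NmuC d μ N) 0 = 0) (j : Fin d) : wD j (NmuC d μ N) 0 = 0 := hHol [j] (by simp)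

lemma val1b 
    (hAhol : ∀ L : List (Fin d), L ≠ [] → L.foldr (fun j f => wDbar j f) (NmuC d μ N) 0 = 0) (k : Fin d) : wDbar k (NmuC d μ N) 0 = 0 := hAhol [k] (by simp)

lemma val2 
    (hHol : ∀ L : List (Fin d), L ≠ [] → L.foldr (fun j f => wD j f) (NmuC d μ N) 0 = 0) (l j : Fin d) : wD l (wD j (NmuC d μ N)) 0 = 0 := hHol [l, j] (by simp)

lemma val2b 
    (hAhol : ∀ L : List (Fin d), L ≠ [] → L.foldr (fun j f => wDbar j f) (NmuC d μ N) 0 = 0) (l k : Fin d) : wDbar l (wDbar k (NmuC d μ N)) 0 = 0 := hAhol [l, k] (by simp)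

lemma evalE1 (hΩ : IsOpen Ω) (hNsm : ContDiffOn ℝ (⊤ : ℕ∞) N Ω) (hNpos : ∀ z ∈ Ω, 0 < N z) (hμ : 0 < μ)
    (h0 : (0 : Fin d → ℂ) ∈ Ω) (hN0 : N 0 = 1) {w : ℂ} (hw : ‖w‖ < 1) 
    (hHol : ∀ L : List (Fin d), L ≠ [] → L.foldr (fun j f => wD j f) (NmuC d μ N) 0 = 0) 
    (hAhol : ∀ L : List (Fin d), L ≠ [] → L.foldr (fun j f => wDbar j f) (NmuC d μ N) 0 = 0) (k : Fin d) (ζ : Fin (d+1)) :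
    wD k.castSucc (gCH d μ N (Fin.last d) ζ) (Fin.snoc (0 : Fin d → ℂ) w)
      = Wbf d (Fin.snoc (0 : Fin d → ℂ) w) * Gif d μ N (Fin.snoc (0 : Fin d → ℂ) w) *
          gCH d μ N k.castSucc ζ (Fin.snoc (0 : Fin d → ℂ) w) := by
  have hp := p0_mem (μ := μ) h0 hN0 hw
  induction ζ using Fin.lastCases with
  | last =>
    have l1 := S3d hΩ hNsm hNpos hμ k _ hp
    rw [front_snoc, val1 hHol k] at l1
    have l2 := gCH_cl hΩ hNsm hNpos hμ k _ hp
    rw [front_snoc, val1 hHol k] at l2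
    rw [l1, l2]; ring
  | cast q =>
    have l1 := S3a hΩ hNsm hNpos hμ q k _ hp
    rw [front_snoc, val1 hHol k] at l1
    have l2 := gCH_cc hΩ hNsm hNpos hμ k q _ hp
    rw [front_snoc, val1 hHol k, val1b hAhol q] at l2
    rw [l1, l2]; ring

lemma evalZ1 (hΩ : IsOpen Ω) (hNsm : ContDiffOn ℝ (⊤ : ℕ∞) N Ω) (hNpos : ∀ z ∈ Ω, 0 < N z) (hμ : 0 < μ)
    (h0 : (0 : Fin d → ℂ) ∈ Ω) (hN0 : N 0 = 1) {w : ℂ} (hw : ‖w‖ < 1) 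
    (hHol : ∀ L : List (Fin d), L ≠ [] → L.foldr (fun j f => wD j f) (NmuC d μ N) 0 = 0) 
    (hAhol : ∀ L : List (Fin d), L ≠ [] → L.foldr (fun j f => wDbar j f) (NmuC d μ N) 0 = 0) (l : Fin d) (θ : Fin (d+1)) :
    wDbar (Fin.last d) (gCH d μ N θ l.castSucc) (Fin.snoc (0 : Fin d → ℂ) w)
      = Wf d (Fin.snoc (0 : Fin d → ℂ) w) * Gif d μ N (Fin.snoc (0 : Fin d → ℂ) w) *
          gCH d μ N θ l.castSucc (Fin.snoc (0 : Fin d → ℂ) w) := by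
  have hp := p0_mem (μ := μ) h0 hN0 hw
  have hUo := isOpen_UU hΩ hNsm hμ
  have hGi := diff_Gi hΩ hNsm hNpos hμ hp
  have s0 := smooth_NmuC (μ := μ) hNsm hNpos
  have hPlb : DifferentiableAt ℝ (fun q' => wDbar l (NmuC d μ N) (front d q'))
      (Fin.snoc (0 : Fin d → ℂ) w) := diff_pull hΩ (contDiffOn_wDbar hΩ s0 l) hp.1
  induction θ using Fin.lastCases with
  | last =>
    have e0 : wDbar (Fin.last d) (gCH d μ N (Fin.last d) l.castSucc)
          (Fin.snoc (0 : Fin d → ℂ) w)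
        = wDbar (Fin.last d)
            (fun q' => -(Gif d μ N q' * Gif d μ N q' * Wbf d q' *
              wDbar l (NmuC d μ N) (front d q'))) (Fin.snoc (0 : Fin d → ℂ) w) :=
      wDbar_congrU hUo hp (gCH_lc hΩ hNsm hNpos hμ l)
    have e1 : wDbar (Fin.last d)
          (fun q' => -(Gif d μ N q' * Gif d μ N q' * Wbf d q' *
            wDbar l (NmuC d μ N) (front d q'))) (Fin.snoc (0 : Fin d → ℂ) w)
        = -wDbar (Fin.last d)
            (fun q' => Gif d μ N q' * Gif d μ N q' * Wbf d q' *
              wDbar l (NmuC d μ N) (front d q')) (Fin.snoc (0 : Fin d → ℂ) w) := wDbar_neg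
    have l2 := gCH_lc hΩ hNsm hNpos hμ l _ hp
    rw [front_snoc, val1b hAhol l] at l2
    rw [e0, e1, wDbar_mul ((hGi.fun_mul hGi).fun_mul diff_Wb) hPlb,
      wDbar_pull_last (dAt hΩ (contDiffOn_wDbar hΩ s0 l) hp.1), l2]
    simp only [front_snoc, val1b hAhol l]
    ring
  | cast q =>
    have hPq : DifferentiableAt ℝ (fun q' => wD q (NmuC d μ N) (front d q'))
        (Fin.snoc (0 : Fin d → ℂ) w) := diff_pull hΩ (contDiffOn_wD hΩ s0 q) hp.1
    have hP2 : DifferentiableAt ℝ (fun q' => wD q (wDbar l (NmuC d μ N)) (front d q'))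
        (Fin.snoc (0 : Fin d → ℂ) w) :=
      diff_pull hΩ (contDiffOn_wD hΩ (contDiffOn_wDbar hΩ s0 l) q) hp.1
    have e0 : wDbar (Fin.last d) (gCH d μ N q.castSucc l.castSucc)
          (Fin.snoc (0 : Fin d → ℂ) w)
        = wDbar (Fin.last d)
            (fun q' => Gif d μ N q' * Gif d μ N q' *
                (wD q (NmuC d μ N) (front d q') * wDbar l (NmuC d μ N) (front d q'))
              - Gif d μ N q' * wD q (wDbar l (NmuC d μ N)) (front d q'))
            (Fin.snoc (0 : Fin d → ℂ) w) :=
      wDbar_congrU hUo hp (gCH_cc hΩ hNsm hNpos hμ q l)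
    have l2 := gCH_cc hΩ hNsm hNpos hμ q l _ hp
    rw [front_snoc, val1 hHol q, val1b hAhol l] at l2
    rw [e0, wDbar_sub ((hGi.fun_mul hGi).fun_mul (hPq.fun_mul hPlb)) (hGi.fun_mul hP2),
      wDbar_mul (hGi.fun_mul hGi) (hPq.fun_mul hPlb), wDbar_mul hPq hPlb,
      wDbar_mul hGi hP2, wDbar_mul hGi hGi,
      wDbarGi_last hΩ hNsm hNpos hp,
      wDbar_pull_last (dAt hΩ (contDiffOn_wD hΩ s0 q) hp.1),
      wDbar_pull_last (dAt hΩ (contDiffOn_wDbar hΩ s0 l) hp.1),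
      wDbar_pull_last (dAt hΩ (contDiffOn_wD hΩ (contDiffOn_wDbar hΩ s0 l) q) hp.1), l2]
    simp only [front_snoc, val1 hHol q, val1b hAhol l]
    ring

end Eval


section Eval2
variable {w : ℂ}

lemma evalZZ (hΩ : IsOpen Ω) (hNsm : ContDiffOn ℝ (⊤ : ℕ∞) N Ω) (hNpos : ∀ z ∈ Ω, 0 < N z) (hμ : 0 < μ)
    (h0 : (0 : Fin d → ℂ) ∈ Ω) (hN0 : N 0 = 1) {w : ℂ} (hw : ‖w‖ < 1) 
    (hHol : ∀ L : List (Fin d), L ≠ [] → L.foldr (fun j f => wD j f) (NmuC d μ N) 0 = 0) 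
    (hAhol : ∀ L : List (Fin d), L ≠ [] → L.foldr (fun j f => wDbar j f) (NmuC d μ N) 0 = 0) (j k l : Fin d) :
    wDbar j.castSucc (gCH d μ N k.castSucc l.castSucc) (Fin.snoc (0 : Fin d → ℂ) w)
      = -(Gif d μ N (Fin.snoc (0 : Fin d → ℂ) w) *
          wDbar j (wD k (wDbar l (NmuC d μ N))) 0) := by
  have hp := p0_mem (μ := μ) h0 hN0 hw
  have hUo := isOpen_UU hΩ hNsm hμ
  have hGi := diff_Gi hΩ hNsm hNpos hμ hp
  have s0 := smooth_NmuC (μ := μ) hNsm hNpos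
  have hPk : DifferentiableAt ℝ (fun q' => wD k (NmuC d μ N) (front d q'))
      (Fin.snoc (0 : Fin d → ℂ) w) := diff_pull hΩ (contDiffOn_wD hΩ s0 k) hp.1
  have hPlb : DifferentiableAt ℝ (fun q' => wDbar l (NmuC d μ N) (front d q'))
      (Fin.snoc (0 : Fin d → ℂ) w) := diff_pull hΩ (contDiffOn_wDbar hΩ s0 l) hp.1
  have hP2 : DifferentiableAt ℝ (fun q' => wD k (wDbar l (NmuC d μ N)) (front d q'))
      (Fin.snoc (0 : Fin d → ℂ) w) :=
    diff_pull hΩ (contDiffOn_wD hΩ (contDiffOn_wDbar hΩ s0 l) k) hp.1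
  have e0 : wDbar j.castSucc (gCH d μ N k.castSucc l.castSucc)
        (Fin.snoc (0 : Fin d → ℂ) w)
      = wDbar j.castSucc
          (fun q' => Gif d μ N q' * Gif d μ N q' *
              (wD k (NmuC d μ N) (front d q') * wDbar l (NmuC d μ N) (front d q'))
            - Gif d μ N q' * wD k (wDbar l (NmuC d μ N)) (front d q'))
          (Fin.snoc (0 : Fin d → ℂ) w) :=
    wDbar_congrU hUo hp (gCH_cc hΩ hNsm hNpos hμ k l)
  rw [e0, wDbar_sub ((hGi.fun_mul hGi).fun_mul (hPk.fun_mul hPlb)) (hGi.fun_mul hP2),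
    wDbar_mul (hGi.fun_mul hGi) (hPk.fun_mul hPlb), wDbar_mul hPk hPlb,
    wDbar_mul hGi hP2, wDbar_mul hGi hGi,
    wDbarGi_cast hΩ hNsm hNpos hp j,
    wDbar_pull_cast (dAt hΩ (contDiffOn_wD hΩ s0 k) hp.1) j,
    wDbar_pull_cast (dAt hΩ (contDiffOn_wDbar hΩ s0 l) hp.1) j,
    wDbar_pull_cast (dAt hΩ (contDiffOn_wD hΩ (contDiffOn_wDbar hΩ s0 l) k) hp.1) j]
  simp only [front_snoc, val1 hHol k, val1b hAhol l, val1b hAhol j, val2b hAhol j l]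
  ring

lemma evalYY (hΩ : IsOpen Ω) (hNsm : ContDiffOn ℝ (⊤ : ℕ∞) N Ω) (hNpos : ∀ z ∈ Ω, 0 < N z) (hμ : 0 < μ)
    (h0 : (0 : Fin d → ℂ) ∈ Ω) (hN0 : N 0 = 1) {w : ℂ} (hw : ‖w‖ < 1) 
    (hHol : ∀ L : List (Fin d), L ≠ [] → L.foldr (fun j f => wD j f) (NmuC d μ N) 0 = 0) 
    (hAhol : ∀ L : List (Fin d), L ≠ [] → L.foldr (fun j f => wDbar j f) (NmuC d μ N) 0 = 0) (j l q : Fin d) :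
    wD l.castSucc (gCH d μ N j.castSucc q.castSucc) (Fin.snoc (0 : Fin d → ℂ) w)
      = -(Gif d μ N (Fin.snoc (0 : Fin d → ℂ) w) *
          wD l (wD j (wDbar q (NmuC d μ N))) 0) := by
  have hp := p0_mem (μ := μ) h0 hN0 hw
  have hUo := isOpen_UU hΩ hNsm hμ
  have hGi := diff_Gi hΩ hNsm hNpos hμ hp
  have s0 := smooth_NmuC (μ := μ) hNsm hNpos
  have hPj : DifferentiableAt ℝ (fun q' => wD j (NmuC d μ N) (front d q'))
      (Fin.snoc (0 : Fin d → ℂ) w) := diff_pull hΩ (contDiffOn_wD hΩ s0 j) hp.1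
  have hPqb : DifferentiableAt ℝ (fun q' => wDbar q (NmuC d μ N) (front d q'))
      (Fin.snoc (0 : Fin d → ℂ) w) := diff_pull hΩ (contDiffOn_wDbar hΩ s0 q) hp.1
  have hP2 : DifferentiableAt ℝ (fun q' => wD j (wDbar q (NmuC d μ N)) (front d q'))
      (Fin.snoc (0 : Fin d → ℂ) w) :=
    diff_pull hΩ (contDiffOn_wD hΩ (contDiffOn_wDbar hΩ s0 q) j) hp.1
  have e0 : wD l.castSucc (gCH d μ N j.castSucc q.castSucc)
        (Fin.snoc (0 : Fin d → ℂ) w)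
      = wD l.castSucc
          (fun q' => Gif d μ N q' * Gif d μ N q' *
              (wD j (NmuC d μ N) (front d q') * wDbar q (NmuC d μ N) (front d q'))
            - Gif d μ N q' * wD j (wDbar q (NmuC d μ N)) (front d q'))
          (Fin.snoc (0 : Fin d → ℂ) w) :=
    wD_congrU hUo hp (gCH_cc hΩ hNsm hNpos hμ j q)
  rw [e0, wD_sub ((hGi.fun_mul hGi).fun_mul (hPj.fun_mul hPqb)) (hGi.fun_mul hP2),
    wD_mul (hGi.fun_mul hGi) (hPj.fun_mul hPqb), wD_mul hPj hPqb,
    wD_mul hGi hP2, wD_mul hGi hGi,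
    wDGi_cast hΩ hNsm hNpos hp l,
    wD_pull_cast (dAt hΩ (contDiffOn_wD hΩ s0 j) hp.1) l,
    wD_pull_cast (dAt hΩ (contDiffOn_wDbar hΩ s0 q) hp.1) l,
    wD_pull_cast (dAt hΩ (contDiffOn_wD hΩ (contDiffOn_wDbar hΩ s0 q) j) hp.1) l]
  simp only [front_snoc, val1 hHol j, val1b hAhol q, val1 hHol l, val2 hHol l j]
  ring

lemma evalP7 (hΩ : IsOpen Ω) (hNsm : ContDiffOn ℝ (⊤ : ℕ∞) N Ω) (hNpos : ∀ z ∈ Ω, 0 < N z) (hμ : 0 < μ)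
    (h0 : (0 : Fin d → ℂ) ∈ Ω) (hN0 : N 0 = 1) {w : ℂ} (hw : ‖w‖ < 1) 
    (hHol : ∀ L : List (Fin d), L ≠ [] → L.foldr (fun j f => wD j f) (NmuC d μ N) 0 = 0) 
    (hAhol : ∀ L : List (Fin d), L ≠ [] → L.foldr (fun j f => wDbar j f) (NmuC d μ N) 0 = 0) (l : Fin d) :
    wD (Fin.last d) (gCH d μ N (Fin.last d) l.castSucc) (Fin.snoc (0 : Fin d → ℂ) w)
      = 0 := by
  have hp := p0_mem (μ := μ) h0 hN0 hw
  have hUo := isOpen_UU hΩ hNsm hμ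
  have hGi := diff_Gi hΩ hNsm hNpos hμ hp
  have s0 := smooth_NmuC (μ := μ) hNsm hNpos
  have hPlb : DifferentiableAt ℝ (fun q' => wDbar l (NmuC d μ N) (front d q'))
      (Fin.snoc (0 : Fin d → ℂ) w) := diff_pull hΩ (contDiffOn_wDbar hΩ s0 l) hp.1
  have e0 : wD (Fin.last d) (gCH d μ N (Fin.last d) l.castSucc)
        (Fin.snoc (0 : Fin d → ℂ) w)
      = wD (Fin.last d)
          (fun q' => -(Gif d μ N q' * Gif d μ N q' * Wbf d q' *
            wDbar l (NmuC d μ N) (front d q'))) (Fin.snoc (0 : Fin d → ℂ) w) :=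
    wD_congrU hUo hp (gCH_lc hΩ hNsm hNpos hμ l)
  have e1 : wD (Fin.last d)
        (fun q' => -(Gif d μ N q' * Gif d μ N q' * Wbf d q' *
          wDbar l (NmuC d μ N) (front d q'))) (Fin.snoc (0 : Fin d → ℂ) w)
      = -wD (Fin.last d)
          (fun q' => Gif d μ N q' * Gif d μ N q' * Wbf d q' *
            wDbar l (NmuC d μ N) (front d q')) (Fin.snoc (0 : Fin d → ℂ) w) := wD_neg
  rw [e0, e1, wD_mul ((hGi.fun_mul hGi).fun_mul diff_Wb) hPlb,
    wD_pull_last (dAt hΩ (contDiffOn_wDbar hΩ s0 l) hp.1)]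
  simp only [front_snoc, val1b hAhol l]
  ring

lemma evalP8 (hΩ : IsOpen Ω) (hNsm : ContDiffOn ℝ (⊤ : ℕ∞) N Ω) (hNpos : ∀ z ∈ Ω, 0 < N z) (hμ : 0 < μ)
    (h0 : (0 : Fin d → ℂ) ∈ Ω) (hN0 : N 0 = 1) {w : ℂ} (hw : ‖w‖ < 1) 
    (hHol : ∀ L : List (Fin d), L ≠ [] → L.foldr (fun j f => wD j f) (NmuC d μ N) 0 = 0) 
    (hAhol : ∀ L : List (Fin d), L ≠ [] → L.foldr (fun j f => wDbar j f) (NmuC d μ N) 0 = 0) (l : Fin d) :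
    wDbar (Fin.last d) (gCH d μ N l.castSucc (Fin.last d)) (Fin.snoc (0 : Fin d → ℂ) w)
      = 0 := by
  have hp := p0_mem (μ := μ) h0 hN0 hw
  have hUo := isOpen_UU hΩ hNsm hμ
  have hGi := diff_Gi hΩ hNsm hNpos hμ hp
  have s0 := smooth_NmuC (μ := μ) hNsm hNpos
  have hPl : DifferentiableAt ℝ (fun q' => wD l (NmuC d μ N) (front d q'))
      (Fin.snoc (0 : Fin d → ℂ) w) := diff_pull hΩ (contDiffOn_wD hΩ s0 l) hp.1
  have e0 : wDbar (Fin.last d) (gCH d μ N l.castSucc (Fin.last d))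
        (Fin.snoc (0 : Fin d → ℂ) w)
      = wDbar (Fin.last d)
          (fun q' => -(Gif d μ N q' * Gif d μ N q' * wD l (NmuC d μ N) (front d q') *
            Wf d q')) (Fin.snoc (0 : Fin d → ℂ) w) :=
    wDbar_congrU hUo hp (gCH_cl hΩ hNsm hNpos hμ l)
  have e1 : wDbar (Fin.last d)
        (fun q' => -(Gif d μ N q' * Gif d μ N q' * wD l (NmuC d μ N) (front d q') *
          Wf d q')) (Fin.snoc (0 : Fin d → ℂ) w)
      = -wDbar (Fin.last d)
          (fun q' => Gif d μ N q' * Gif d μ N q' * wD l (NmuC d μ N) (front d q') *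
            Wf d q') (Fin.snoc (0 : Fin d → ℂ) w) := wDbar_neg
  rw [e0, e1, wDbar_mul ((hGi.fun_mul hGi).fun_mul hPl) diff_W, wDbar_W,
    wDbar_mul (hGi.fun_mul hGi) hPl,
    wDbar_pull_last (dAt hΩ (contDiffOn_wD hΩ s0 l) hp.1)]
  simp only [front_snoc, val1 hHol l]
  ring

end Eval2


section Eval3
variable {w : ℂ}

lemma evalP9 (hΩ : IsOpen Ω) (hNsm : ContDiffOn ℝ (⊤ : ℕ∞) N Ω) (hNpos : ∀ z ∈ Ω, 0 < N z) (hμ : 0 < μ)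
    (h0 : (0 : Fin d → ℂ) ∈ Ω) (hN0 : N 0 = 1) {w : ℂ} (hw : ‖w‖ < 1) 
    (hAhol : ∀ L : List (Fin d), L ≠ [] → L.foldr (fun j f => wDbar j f) (NmuC d μ N) 0 = 0) (l : Fin d) :
    wDbar l.castSucc (wD (Fin.last d) (gCH d μ N (Fin.last d) (Fin.last d)))
      (Fin.snoc (0 : Fin d → ℂ) w) = 0 := by
  have hp := p0_mem (μ := μ) h0 hN0 hw
  have hUo := isOpen_UU hΩ hNsm hμ
  have hGi := diff_Gi hΩ hNsm hNpos hμ hp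
  have e0 : wDbar l.castSucc (wD (Fin.last d) (gCH d μ N (Fin.last d) (Fin.last d)))
        (Fin.snoc (0 : Fin d → ℂ) w)
      = wDbar l.castSucc
          (fun q' => 2 * (Gif d μ N q' * Gif d μ N q') * Wbf d q'
            + 2 * (Gif d μ N q' * Gif d μ N q' * Gif d μ N q') * Wf d q' * Wbf d q' *
                Wbf d q') (Fin.snoc (0 : Fin d → ℂ) w) :=
    wDbar_congrU hUo hp (S3c hΩ hNsm hNpos hμ)
  rw [e0, wDbar_add (((hGi.fun_mul hGi).const_mul 2).fun_mul diff_Wb)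
      ((((((hGi.fun_mul hGi).fun_mul hGi).const_mul 2).fun_mul diff_W).fun_mul diff_Wb).fun_mul diff_Wb),
    wDbar_mul ((hGi.fun_mul hGi).const_mul 2) diff_Wb, wDbar_Wb_cast,
    wDbar_const_mul 2 (hGi.fun_mul hGi),
    wDbar_mul (((((hGi.fun_mul hGi).fun_mul hGi).const_mul 2).fun_mul diff_W).fun_mul diff_Wb) diff_Wb,
    wDbar_mul ((((hGi.fun_mul hGi).fun_mul hGi).const_mul 2).fun_mul diff_W) diff_Wb,
    wDbar_mul (((hGi.fun_mul hGi).fun_mul hGi).const_mul 2) diff_W, wDbar_W,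
    wDbar_const_mul 2 ((hGi.fun_mul hGi).fun_mul hGi),
    wDbar_mul (hGi.fun_mul hGi) hGi, wDbar_mul hGi hGi,
    wDbarGi_cast hΩ hNsm hNpos hp l]
  simp only [front_snoc, val1b hAhol l, wDbar_Wb_cast, wDbar_W]
  ring

lemma evalP10 (hΩ : IsOpen Ω) (hNsm : ContDiffOn ℝ (⊤ : ℕ∞) N Ω) (hNpos : ∀ z ∈ Ω, 0 < N z) (hμ : 0 < μ)
    (h0 : (0 : Fin d → ℂ) ∈ Ω) (hN0 : N 0 = 1) {w : ℂ} (hw : ‖w‖ < 1) 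
    (hHol : ∀ L : List (Fin d), L ≠ [] → L.foldr (fun j f => wD j f) (NmuC d μ N) 0 = 0) (l : Fin d) :
    wDbar (Fin.last d) (wD l.castSucc (gCH d μ N (Fin.last d) (Fin.last d)))
      (Fin.snoc (0 : Fin d → ℂ) w) = 0 := by
  have hp := p0_mem (μ := μ) h0 hN0 hw
  have hUo := isOpen_UU hΩ hNsm hμ
  have hGi := diff_Gi hΩ hNsm hNpos hμ hp
  have s0 := smooth_NmuC (μ := μ) hNsm hNpos
  have hPl : DifferentiableAt ℝ (fun q' => wD l (NmuC d μ N) (front d q'))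
      (Fin.snoc (0 : Fin d → ℂ) w) := diff_pull hΩ (contDiffOn_wD hΩ s0 l) hp.1
  have e0 : wDbar (Fin.last d) (wD l.castSucc (gCH d μ N (Fin.last d) (Fin.last d)))
        (Fin.snoc (0 : Fin d → ℂ) w)
      = wDbar (Fin.last d)
          (fun q' => -(Gif d μ N q' * Gif d μ N q') * wD l (NmuC d μ N) (front d q')
            - 2 * (Gif d μ N q' * Gif d μ N q' * Gif d μ N q') *
                wD l (NmuC d μ N) (front d q') * Wf d q' * Wbf d q')
          (Fin.snoc (0 : Fin d → ℂ) w) :=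
    wDbar_congrU hUo hp (S3d hΩ hNsm hNpos hμ l)
  rw [e0, wDbar_sub ((hGi.fun_mul hGi).fun_neg.fun_mul hPl)
      (((((((hGi.fun_mul hGi).fun_mul hGi).const_mul 2).fun_mul hPl).fun_mul diff_W).fun_mul diff_Wb)),
    wDbar_mul (hGi.fun_mul hGi).fun_neg hPl,
    wDbar_mul (((((hGi.fun_mul hGi).fun_mul hGi).const_mul 2).fun_mul hPl).fun_mul diff_W) diff_Wb,
    wDbar_mul ((((hGi.fun_mul hGi).fun_mul hGi).const_mul 2).fun_mul hPl) diff_W, wDbar_W,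
    wDbar_mul (((hGi.fun_mul hGi).fun_mul hGi).const_mul 2) hPl,
    wDbar_pull_last (dAt hΩ (contDiffOn_wD hΩ s0 l) hp.1)]
  simp only [front_snoc, val1 hHol l]
  ring

lemma evalT1s1 (hΩ : IsOpen Ω) (hNsm : ContDiffOn ℝ (⊤ : ℕ∞) N Ω) (hNpos : ∀ z ∈ Ω, 0 < N z) (hμ : 0 < μ)
    (h0 : (0 : Fin d → ℂ) ∈ Ω) (hN0 : N 0 = 1) {w : ℂ} (hw : ‖w‖ < 1) 
    (hHol : ∀ L : List (Fin d), L ≠ [] → L.foldr (fun j f => wD j f) (NmuC d μ N) 0 = 0) 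
    (hAhol : ∀ L : List (Fin d), L ≠ [] → L.foldr (fun j f => wDbar j f) (NmuC d μ N) 0 = 0) (j k l : Fin d) :
    wDbar l.castSucc (wD k.castSucc (gCH d μ N (Fin.last d) j.castSucc))
      (Fin.snoc (0 : Fin d → ℂ) w)
    = -(Gif d μ N (Fin.snoc (0 : Fin d → ℂ) w) * Gif d μ N (Fin.snoc (0 : Fin d → ℂ) w) *
        Wbf d (Fin.snoc (0 : Fin d → ℂ) w) *
        wDbar l (wD k (wDbar j (NmuC d μ N))) 0) := by
  have hp := p0_mem (μ := μ) h0 hN0 hw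
  have hUo := isOpen_UU hΩ hNsm hμ
  have hGi := diff_Gi hΩ hNsm hNpos hμ hp
  have s0 := smooth_NmuC (μ := μ) hNsm hNpos
  have hPk : DifferentiableAt ℝ (fun q' => wD k (NmuC d μ N) (front d q'))
      (Fin.snoc (0 : Fin d → ℂ) w) := diff_pull hΩ (contDiffOn_wD hΩ s0 k) hp.1
  have hPjb : DifferentiableAt ℝ (fun q' => wDbar j (NmuC d μ N) (front d q'))
      (Fin.snoc (0 : Fin d → ℂ) w) := diff_pull hΩ (contDiffOn_wDbar hΩ s0 j) hp.1
  have hP2 : DifferentiableAt ℝ (fun q' => wD k (wDbar j (NmuC d μ N)) (front d q'))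
      (Fin.snoc (0 : Fin d → ℂ) w) :=
    diff_pull hΩ (contDiffOn_wD hΩ (contDiffOn_wDbar hΩ s0 j) k) hp.1
  have e0 : wDbar l.castSucc (wD k.castSucc (gCH d μ N (Fin.last d) j.castSucc))
        (Fin.snoc (0 : Fin d → ℂ) w)
      = wDbar l.castSucc
          (fun q' => 2 * (Gif d μ N q' * Gif d μ N q' * Gif d μ N q') *
                wD k (NmuC d μ N) (front d q') * Wbf d q' * wDbar j (NmuC d μ N) (front d q')
            - Gif d μ N q' * Gif d μ N q' * Wbf d q' *
                wD k (wDbar j (NmuC d μ N)) (front d q'))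
          (Fin.snoc (0 : Fin d → ℂ) w) :=
    wDbar_congrU hUo hp (S3a hΩ hNsm hNpos hμ j k)
  rw [e0, wDbar_sub
      ((((((hGi.fun_mul hGi).fun_mul hGi).const_mul 2).fun_mul hPk).fun_mul diff_Wb).fun_mul hPjb)
      (((hGi.fun_mul hGi).fun_mul diff_Wb).fun_mul hP2),
    wDbar_mul (((((hGi.fun_mul hGi).fun_mul hGi).const_mul 2).fun_mul hPk).fun_mul diff_Wb) hPjb,
    wDbar_mul ((hGi.fun_mul hGi).fun_mul diff_Wb) hP2,
    wDbar_mul (hGi.fun_mul hGi) diff_Wb, wDbar_Wb_cast,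
    wDbar_mul hGi hGi, wDbarGi_cast hΩ hNsm hNpos hp l,
    wDbar_pull_cast (dAt hΩ (contDiffOn_wDbar hΩ s0 j) hp.1) l,
    wDbar_pull_cast (dAt hΩ (contDiffOn_wD hΩ (contDiffOn_wDbar hΩ s0 j) k) hp.1) l]
  simp only [front_snoc, val1 hHol k, val1b hAhol j, val1b hAhol l, val2b hAhol l j]
  ring

lemma evalT1s2 (hΩ : IsOpen Ω) (hNsm : ContDiffOn ℝ (⊤ : ℕ∞) N Ω) (hNpos : ∀ z ∈ Ω, 0 < N z) (hμ : 0 < μ)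
    (h0 : (0 : Fin d → ℂ) ∈ Ω) (hN0 : N 0 = 1) {w : ℂ} (hw : ‖w‖ < 1) 
    (hHol : ∀ L : List (Fin d), L ≠ [] → L.foldr (fun j f => wD j f) (NmuC d μ N) 0 = 0) 
    (hAhol : ∀ L : List (Fin d), L ≠ [] → L.foldr (fun j f => wDbar j f) (NmuC d μ N) 0 = 0) (j k l : Fin d) :
    wDbar k.castSucc (wD l.castSucc (gCH d μ N j.castSucc (Fin.last d)))
      (Fin.snoc (0 : Fin d → ℂ) w)
    = -(Gif d μ N (Fin.snoc (0 : Fin d → ℂ) w) * Gif d μ N (Fin.snoc (0 : Fin d → ℂ) w) *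
        Wf d (Fin.snoc (0 : Fin d → ℂ) w) *
        wDbar k (wD l (wD j (NmuC d μ N))) 0) := by
  have hp := p0_mem (μ := μ) h0 hN0 hw
  have hUo := isOpen_UU hΩ hNsm hμ
  have hGi := diff_Gi hΩ hNsm hNpos hμ hp
  have s0 := smooth_NmuC (μ := μ) hNsm hNpos
  have hPl : DifferentiableAt ℝ (fun q' => wD l (NmuC d μ N) (front d q'))
      (Fin.snoc (0 : Fin d → ℂ) w) := diff_pull hΩ (contDiffOn_wD hΩ s0 l) hp.1
  have hPj : DifferentiableAt ℝ (fun q' => wD j (NmuC d μ N) (front d q'))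
      (Fin.snoc (0 : Fin d → ℂ) w) := diff_pull hΩ (contDiffOn_wD hΩ s0 j) hp.1
  have hP2 : DifferentiableAt ℝ (fun q' => wD l (wD j (NmuC d μ N)) (front d q'))
      (Fin.snoc (0 : Fin d → ℂ) w) :=
    diff_pull hΩ (contDiffOn_wD hΩ (contDiffOn_wD hΩ s0 j) l) hp.1
  have e0 : wDbar k.castSucc (wD l.castSucc (gCH d μ N j.castSucc (Fin.last d)))
        (Fin.snoc (0 : Fin d → ℂ) w)
      = wDbar k.castSucc
          (fun q' => 2 * (Gif d μ N q' * Gif d μ N q' * Gif d μ N q') *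
                wD l (NmuC d μ N) (front d q') * wD j (NmuC d μ N) (front d q') * Wf d q'
            - Gif d μ N q' * Gif d μ N q' * wD l (wD j (NmuC d μ N)) (front d q') *
                Wf d q')
          (Fin.snoc (0 : Fin d → ℂ) w) :=
    wDbar_congrU hUo hp (S3b hΩ hNsm hNpos hμ j l)
  rw [e0, wDbar_sub
      ((((((hGi.fun_mul hGi).fun_mul hGi).const_mul 2).fun_mul hPl).fun_mul hPj).fun_mul diff_W)
      (((hGi.fun_mul hGi).fun_mul hP2).fun_mul diff_W),
    wDbar_mul (((((hGi.fun_mul hGi).fun_mul hGi).const_mul 2).fun_mul hPl).fun_mul hPj) diff_W,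
    wDbar_mul ((((hGi.fun_mul hGi).fun_mul hGi).const_mul 2).fun_mul hPl) hPj,
    wDbar_mul ((hGi.fun_mul hGi).fun_mul hP2) diff_W, wDbar_W,
    wDbar_mul (hGi.fun_mul hGi) hP2,
    wDbar_pull_cast (dAt hΩ (contDiffOn_wD hΩ (contDiffOn_wD hΩ s0 j) l) hp.1) k]
  simp only [front_snoc, val1 hHol l, val1 hHol j, val2 hHol l j]
  ring

end Eval3


section Comm

lemma commC1 (hΩ : IsOpen Ω) (hNsm : ContDiffOn ℝ (⊤ : ℕ∞) N Ω) (hNpos : ∀ z ∈ Ω, 0 < N z) (hμ : 0 < μ) (h0 : (0 : Fin d → ℂ) ∈ Ω) (j k l : Fin d) :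
    wDbar l (wD k (wDbar j (NmuC d μ N))) 0 = wDbar j (wD k (wDbar l (NmuC d μ N))) 0 := by
  have s0 := smooth_NmuC (μ := μ) hNsm hNpos
  have e1 : wDbar l (wD k (wDbar j (NmuC d μ N))) 0
      = wDbar l (wDbar j (wD k (NmuC d μ N))) 0 :=
    wDbar_congrU hΩ h0 (fun q hq => wD_wDbar_comm (cAt2 hΩ s0 hq) k j)
  have e2 : wDbar l (wDbar j (wD k (NmuC d μ N))) 0
      = wDbar j (wDbar l (wD k (NmuC d μ N))) 0 :=
    wDbar_wDbar_comm (cAt2 hΩ (contDiffOn_wD hΩ s0 k) h0) l j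
  have e3 : wDbar j (wDbar l (wD k (NmuC d μ N))) 0
      = wDbar j (wD k (wDbar l (NmuC d μ N))) 0 :=
    wDbar_congrU hΩ h0 (fun q hq => (wD_wDbar_comm (cAt2 hΩ s0 hq) k l).symm)
  rw [e1, e2, e3]

lemma commC2 (hΩ : IsOpen Ω) (hNsm : ContDiffOn ℝ (⊤ : ℕ∞) N Ω) (hNpos : ∀ z ∈ Ω, 0 < N z) (hμ : 0 < μ) (h0 : (0 : Fin d → ℂ) ∈ Ω) (j k l : Fin d) :
    wDbar k (wD l (wD j (NmuC d μ N))) 0 = wD l (wD j (wDbar k (NmuC d μ N))) 0 := by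
  have s0 := smooth_NmuC (μ := μ) hNsm hNpos
  have e1 : wD l (wD j (wDbar k (NmuC d μ N))) 0
      = wD l (wDbar k (wD j (NmuC d μ N))) 0 :=
    wD_congrU hΩ h0 (fun q hq => wD_wDbar_comm (cAt2 hΩ s0 hq) j k)
  have e2 : wD l (wDbar k (wD j (NmuC d μ N))) 0
      = wDbar k (wD l (wD j (NmuC d μ N))) 0 :=
    wD_wDbar_comm (cAt2 hΩ (contDiffOn_wD hΩ s0 j) h0) l k
  rw [e1, e2]

end Comm

section Contract
variable {n : ℕ}

lemma contract_left (M : Matrix (Fin n) (Fin n) ℂ) (hM : M * M⁻¹ = 1) (c : ℂ)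
    (Y Z : Fin n → ℂ) (i : Fin n) (hY : ∀ ζ, Y ζ = c * M i ζ) :
    ∑ ζ, ∑ θ, M⁻¹ ζ θ * Y ζ * Z θ = c * Z i := by
  calc ∑ ζ, ∑ θ, M⁻¹ ζ θ * Y ζ * Z θ
      = ∑ θ, ∑ ζ, M i ζ * M⁻¹ ζ θ * (c * Z θ) := by
        rw [Finset.sum_comm]
        exact Finset.sum_congr rfl fun θ _ => Finset.sum_congr rfl fun ζ _ => by
          rw [hY]; ring
    _ = ∑ θ, (∑ ζ, M i ζ * M⁻¹ ζ θ) * (c * Z θ) := by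
        exact Finset.sum_congr rfl fun θ _ => (Finset.sum_mul _ _ _).symm
    _ = ∑ θ, (M * M⁻¹) i θ * (c * Z θ) := by
        exact Finset.sum_congr rfl fun θ _ => by rw [Matrix.mul_apply]
    _ = ∑ θ, (1 : Matrix (Fin n) (Fin n) ℂ) i θ * (c * Z θ) := by rw [hM]
    _ = c * Z i := by
        simp [Matrix.one_apply]

lemma contract_right (M : Matrix (Fin n) (Fin n) ℂ) (hM : M⁻¹ * M = 1) (c : ℂ)
    (Y Z : Fin n → ℂ) (i : Fin n) (hZ : ∀ θ, Z θ = c * M θ i) :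
    ∑ ζ, ∑ θ, M⁻¹ ζ θ * Y ζ * Z θ = c * Y i := by
  calc ∑ ζ, ∑ θ, M⁻¹ ζ θ * Y ζ * Z θ
      = ∑ ζ, ∑ θ, M⁻¹ ζ θ * M θ i * (c * Y ζ) := by
        exact Finset.sum_congr rfl fun ζ _ => Finset.sum_congr rfl fun θ _ => by
          rw [hZ]; ring
    _ = ∑ ζ, (∑ θ, M⁻¹ ζ θ * M θ i) * (c * Y ζ) := by
        exact Finset.sum_congr rfl fun ζ _ => (Finset.sum_mul _ _ _).symm
    _ = ∑ ζ, (M⁻¹ * M) ζ i * (c * Y ζ) := by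
        exact Finset.sum_congr rfl fun ζ _ => by rw [Matrix.mul_apply]
    _ = ∑ ζ, (1 : Matrix (Fin n) (Fin n) ℂ) ζ i * (c * Y ζ) := by rw [hM]
    _ = c * Y i := by
        simp [Matrix.one_apply]

end Contract

end CHMain
end

open CHTools CHMain

/-- vanishing components of the curvature tensor at (0,w). -/
theorem Rcurv_vanishing_at_zero (d : ℕ) (hd : 1 ≤ d) (γ μ : ℝ) (hγ : 0 < γ) (hμ : 0 < μ)
    (Ω : Set (Fin d → ℂ)) (hΩopen : IsOpen Ω) (hΩconn : IsPreconnected Ω)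
    (N : (Fin d → ℂ) → ℝ) (hNsm : ContDiffOn ℝ (⊤ : ℕ∞) N Ω) (hNpos : ∀ z ∈ Ω, 0 < N z)
    (h0 : (0 : Fin d → ℂ) ∈ Ω) (hN0 : N 0 = 1)
    (hHol : ∀ L : List (Fin d), L ≠ [] → L.foldr (fun j f => wD j f) (NmuC d μ N) 0 = 0)
    (hAhol : ∀ L : List (Fin d), L ≠ [] → L.foldr (fun j f => wDbar j f) (NmuC d μ N) 0 = 0)
    (hgOmPD : ∀ z ∈ Ω, (gOmMat d μ N z).PosDef)
    (hgPD : ∀ z ∈ Ω, ∀ w : ℂ, ‖w‖ ^ 2 < N z ^ μ →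
      (gCHmat d μ N (Fin.snoc z w)).PosDef)
    (w : ℂ) (hw : ‖w‖ < 1) (j k l : Fin d) :
    Rcurv d μ N (Fin.last d) j.castSucc k.castSucc l.castSucc
        (Fin.snoc (0 : Fin d → ℂ) w) = 0 ∧
      Rcurv d μ N j.castSucc (Fin.last d) l.castSucc k.castSucc
        (Fin.snoc (0 : Fin d → ℂ) w) = 0 ∧
      Rcurv d μ N (Fin.last d) (Fin.last d) (Fin.last d) l.castSucc
        (Fin.snoc (0 : Fin d → ℂ) w) = 0 ∧
      Rcurv d μ N (Fin.last d) (Fin.last d) l.castSucc (Fin.last d)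
        (Fin.snoc (0 : Fin d → ℂ) w) = 0 := by
  classical
  have hp2 : ‖w‖ ^ 2 < N 0 ^ μ := by
    rw [hN0, Real.one_rpow]
    exact pow_lt_one₀ (norm_nonneg w) hw (by norm_num)
  have hPD := hgPD 0 h0 w hp2
  have hdet : IsUnit (gCHmat d μ N (Fin.snoc (0 : Fin d → ℂ) w)).det :=
    (Matrix.isUnit_iff_isUnit_det _).mp hPD.isUnit
  have hMl : gCHmat d μ N (Fin.snoc (0 : Fin d → ℂ) w) * (gCHmat d μ N (Fin.snoc (0 : Fin d → ℂ) w))⁻¹ = 1 :=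
    Matrix.mul_nonsing_inv _ hdet
  have hMr : (gCHmat d μ N (Fin.snoc (0 : Fin d → ℂ) w))⁻¹ * gCHmat d μ N (Fin.snoc (0 : Fin d → ℂ) w) = 1 :=
    Matrix.nonsing_inv_mul _ hdet
  refine ⟨?_, ?_, ?_, ?_⟩
  · show -(wDbar l.castSucc (wD k.castSucc (gCH d μ N (Fin.last d) j.castSucc)) (Fin.snoc (0 : Fin d → ℂ) w)) +
      ∑ ζ : Fin (d+1), ∑ θ : Fin (d+1),
        (gCHmat d μ N (Fin.snoc (0 : Fin d → ℂ) w))⁻¹ ζ θ *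
          wD k.castSucc (gCH d μ N (Fin.last d) ζ) (Fin.snoc (0 : Fin d → ℂ) w) *
          wDbar j.castSucc (gCH d μ N θ l.castSucc) (Fin.snoc (0 : Fin d → ℂ) w) = 0
    have hs : (∑ ζ : Fin (d+1), ∑ θ : Fin (d+1),
          (gCHmat d μ N (Fin.snoc (0 : Fin d → ℂ) w))⁻¹ ζ θ *
            wD k.castSucc (gCH d μ N (Fin.last d) ζ) (Fin.snoc (0 : Fin d → ℂ) w) *
            wDbar j.castSucc (gCH d μ N θ l.castSucc) (Fin.snoc (0 : Fin d → ℂ) w))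
        = (Wbf d (Fin.snoc (0 : Fin d → ℂ) w) * Gif d μ N (Fin.snoc (0 : Fin d → ℂ) w)) *
            wDbar j.castSucc (gCH d μ N k.castSucc l.castSucc) (Fin.snoc (0 : Fin d → ℂ) w) :=
      contract_left (gCHmat d μ N (Fin.snoc (0 : Fin d → ℂ) w)) hMl
        (Wbf d (Fin.snoc (0 : Fin d → ℂ) w) * Gif d μ N (Fin.snoc (0 : Fin d → ℂ) w))
        (fun ζ => wD k.castSucc (gCH d μ N (Fin.last d) ζ) (Fin.snoc (0 : Fin d → ℂ) w))
        (fun θ => wDbar j.castSucc (gCH d μ N θ l.castSucc) (Fin.snoc (0 : Fin d → ℂ) w))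
        k.castSucc
        (fun ζ => evalE1 hΩopen hNsm hNpos hμ h0 hN0 hw hHol hAhol k ζ)
    rw [hs, evalT1s1 hΩopen hNsm hNpos hμ h0 hN0 hw hHol hAhol j k l,
      evalZZ hΩopen hNsm hNpos hμ h0 hN0 hw hHol hAhol j k l,
      commC1 hΩopen hNsm hNpos hμ h0 j k l]
    ring
  · show -(wDbar k.castSucc (wD l.castSucc (gCH d μ N j.castSucc (Fin.last d))) (Fin.snoc (0 : Fin d → ℂ) w)) +
      ∑ ζ : Fin (d+1), ∑ θ : Fin (d+1),
        (gCHmat d μ N (Fin.snoc (0 : Fin d → ℂ) w))⁻¹ ζ θ *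
          wD l.castSucc (gCH d μ N j.castSucc ζ) (Fin.snoc (0 : Fin d → ℂ) w) *
          wDbar (Fin.last d) (gCH d μ N θ k.castSucc) (Fin.snoc (0 : Fin d → ℂ) w) = 0
    have hs : (∑ ζ : Fin (d+1), ∑ θ : Fin (d+1),
          (gCHmat d μ N (Fin.snoc (0 : Fin d → ℂ) w))⁻¹ ζ θ *
            wD l.castSucc (gCH d μ N j.castSucc ζ) (Fin.snoc (0 : Fin d → ℂ) w) *
            wDbar (Fin.last d) (gCH d μ N θ k.castSucc) (Fin.snoc (0 : Fin d → ℂ) w))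
        = (Wf d (Fin.snoc (0 : Fin d → ℂ) w) * Gif d μ N (Fin.snoc (0 : Fin d → ℂ) w)) *
            wD l.castSucc (gCH d μ N j.castSucc k.castSucc) (Fin.snoc (0 : Fin d → ℂ) w) :=
      contract_right (gCHmat d μ N (Fin.snoc (0 : Fin d → ℂ) w)) hMr
        (Wf d (Fin.snoc (0 : Fin d → ℂ) w) * Gif d μ N (Fin.snoc (0 : Fin d → ℂ) w))
        (fun ζ => wD l.castSucc (gCH d μ N j.castSucc ζ) (Fin.snoc (0 : Fin d → ℂ) w))
        (fun θ => wDbar (Fin.last d) (gCH d μ N θ k.castSucc) (Fin.snoc (0 : Fin d → ℂ) w))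
        k.castSucc
        (fun θ => evalZ1 hΩopen hNsm hNpos hμ h0 hN0 hw hHol hAhol k θ)
    rw [hs, evalT1s2 hΩopen hNsm hNpos hμ h0 hN0 hw hHol hAhol j k l,
      evalYY hΩopen hNsm hNpos hμ h0 hN0 hw hHol hAhol j l k,
      commC2 hΩopen hNsm hNpos hμ h0 j k l]
    ring
  · show -(wDbar l.castSucc (wD (Fin.last d) (gCH d μ N (Fin.last d) (Fin.last d))) (Fin.snoc (0 : Fin d → ℂ) w)) +
      ∑ ζ : Fin (d+1), ∑ θ : Fin (d+1),
        (gCHmat d μ N (Fin.snoc (0 : Fin d → ℂ) w))⁻¹ ζ θ *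
          wD (Fin.last d) (gCH d μ N (Fin.last d) ζ) (Fin.snoc (0 : Fin d → ℂ) w) *
          wDbar (Fin.last d) (gCH d μ N θ l.castSucc) (Fin.snoc (0 : Fin d → ℂ) w) = 0
    have hs : (∑ ζ : Fin (d+1), ∑ θ : Fin (d+1),
          (gCHmat d μ N (Fin.snoc (0 : Fin d → ℂ) w))⁻¹ ζ θ *
            wD (Fin.last d) (gCH d μ N (Fin.last d) ζ) (Fin.snoc (0 : Fin d → ℂ) w) *
            wDbar (Fin.last d) (gCH d μ N θ l.castSucc) (Fin.snoc (0 : Fin d → ℂ) w))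
        = (Wf d (Fin.snoc (0 : Fin d → ℂ) w) * Gif d μ N (Fin.snoc (0 : Fin d → ℂ) w)) *
            wD (Fin.last d) (gCH d μ N (Fin.last d) l.castSucc) (Fin.snoc (0 : Fin d → ℂ) w) :=
      contract_right (gCHmat d μ N (Fin.snoc (0 : Fin d → ℂ) w)) hMr
        (Wf d (Fin.snoc (0 : Fin d → ℂ) w) * Gif d μ N (Fin.snoc (0 : Fin d → ℂ) w))
        (fun ζ => wD (Fin.last d) (gCH d μ N (Fin.last d) ζ) (Fin.snoc (0 : Fin d → ℂ) w))
        (fun θ => wDbar (Fin.last d) (gCH d μ N θ l.castSucc) (Fin.snoc (0 : Fin d → ℂ) w))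
        l.castSucc
        (fun θ => evalZ1 hΩopen hNsm hNpos hμ h0 hN0 hw hHol hAhol l θ)
    rw [hs, evalP7 hΩopen hNsm hNpos hμ h0 hN0 hw hHol hAhol l,
      evalP9 hΩopen hNsm hNpos hμ h0 hN0 hw hAhol l]
    ring
  · show -(wDbar (Fin.last d) (wD l.castSucc (gCH d μ N (Fin.last d) (Fin.last d))) (Fin.snoc (0 : Fin d → ℂ) w)) +
      ∑ ζ : Fin (d+1), ∑ θ : Fin (d+1),
        (gCHmat d μ N (Fin.snoc (0 : Fin d → ℂ) w))⁻¹ ζ θ *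
          wD l.castSucc (gCH d μ N (Fin.last d) ζ) (Fin.snoc (0 : Fin d → ℂ) w) *
          wDbar (Fin.last d) (gCH d μ N θ (Fin.last d)) (Fin.snoc (0 : Fin d → ℂ) w) = 0
    have hs : (∑ ζ : Fin (d+1), ∑ θ : Fin (d+1),
          (gCHmat d μ N (Fin.snoc (0 : Fin d → ℂ) w))⁻¹ ζ θ *
            wD l.castSucc (gCH d μ N (Fin.last d) ζ) (Fin.snoc (0 : Fin d → ℂ) w) *
            wDbar (Fin.last d) (gCH d μ N θ (Fin.last d)) (Fin.snoc (0 : Fin d → ℂ) w))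
        = (Wbf d (Fin.snoc (0 : Fin d → ℂ) w) * Gif d μ N (Fin.snoc (0 : Fin d → ℂ) w)) *
            wDbar (Fin.last d) (gCH d μ N l.castSucc (Fin.last d)) (Fin.snoc (0 : Fin d → ℂ) w) :=
      contract_left (gCHmat d μ N (Fin.snoc (0 : Fin d → ℂ) w)) hMl
        (Wbf d (Fin.snoc (0 : Fin d → ℂ) w) * Gif d μ N (Fin.snoc (0 : Fin d → ℂ) w))
        (fun ζ => wD l.castSucc (gCH d μ N (Fin.last d) ζ) (Fin.snoc (0 : Fin d → ℂ) w))
        (fun θ => wDbar (Fin.last d) (gCH d μ N θ (Fin.last d)) (Fin.snoc (0 : Fin d → ℂ) w))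
        l.castSucc
        (fun ζ => evalE1 hΩopen hNsm hNpos hμ h0 hN0 hw hHol hAhol l ζ)
    rw [hs, evalP8 hΩopen hNsm hNpos hμ h0 hN0 hw hHol hAhol l,
      evalP10 hΩopen hNsm hNpos hμ h0 hN0 hw hHol l]
    ring
end

section
/- At every point (0,w) of the Cartan–Hartogs domain M_Ω(μ), the curvature tensor of g(μ) satisfies [R_{ww̄kl̄}]_{z=0} = [(N^μ)_{kl̄}]_{z=0}/(1 − |w|²)³ for all 1 ≤ k,l ≤ d, and [R_{ww̄ww̄}]_{z=0} = −2/(1 − |w|²)⁴. -/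
open Complex Matrix
open scoped ComplexOrder

noncomputable section Toolkit




/-- generic Wirtinger-type operator: `wD = wop (-I)`, `wDbar = wop I`. -/
def wop {n : ℕ} (s : ℂ) (j : Fin n) (f : (Fin n → ℂ) → ℂ) : (Fin n → ℂ) → ℂ :=
  fun p => (1 / 2 : ℂ) *
    (fderiv ℝ f p (Pi.single j 1) + s * fderiv ℝ f p (Pi.single j Complex.I))

section wopRules

variable {n : ℕ} {s : ℂ} {j : Fin n} {f g : (Fin n → ℂ) → ℂ} {p : Fin n → ℂ}

lemma wD_eq_wop (j : Fin n) (f : (Fin n → ℂ) → ℂ) : wD j f = wop (-Complex.I) j f := by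
  funext p; simp [wD, wop, sub_eq_add_neg, neg_mul]

lemma wDbar_eq_wop (j : Fin n) (f : (Fin n → ℂ) → ℂ) : wDbar j f = wop Complex.I j f := rfl

lemma wop_congr (h : f =ᶠ[nhds p] g) : wop s j f p = wop s j g p := by
  unfold wop; rw [h.fderiv_eq]

lemma wop_hasFDerivAt {f' : (Fin n → ℂ) →L[ℝ] ℂ} (h : HasFDerivAt f f' p) :
    wop s j f p = (1 / 2 : ℂ) * (f' (Pi.single j 1) + s * f' (Pi.single j Complex.I)) := by
  unfold wop; rw [h.fderiv]

lemma wop_const (c : ℂ) : wop s j (fun _ => c) p = 0 := by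
  unfold wop; rw [fderiv_fun_const]; simp

lemma wop_add (hf : DifferentiableAt ℝ f p) (hg : DifferentiableAt ℝ g p) :
    wop s j (fun q => f q + g q) p = wop s j f p + wop s j g p := by
  unfold wop; rw [fderiv_fun_add hf hg]; simp; ring

lemma wop_neg : wop s j (fun q => -f q) p = -wop s j f p := by
  unfold wop; rw [fderiv_fun_neg]; simp; ring

lemma wop_sub (hf : DifferentiableAt ℝ f p) (hg : DifferentiableAt ℝ g p) :
    wop s j (fun q => f q - g q) p = wop s j f p - wop s j g p := by
  simp only [sub_eq_add_neg]
  rw [wop_add hf hg.fun_neg, wop_neg]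

lemma wop_const_mul (c : ℂ) (hf : DifferentiableAt ℝ f p) :
    wop s j (fun q => c * f q) p = c * wop s j f p := by
  unfold wop; rw [fderiv_const_mul hf]; simp; ring

lemma wop_mul (hf : DifferentiableAt ℝ f p) (hg : DifferentiableAt ℝ g p) :
    wop s j (fun q => f q * g q) p = wop s j f p * g p + f p * wop s j g p := by
  unfold wop; rw [fderiv_fun_mul hf hg]; simp [smul_eq_mul]; ring

lemma wop_inv (hf : DifferentiableAt ℝ f p) (h0 : f p ≠ 0) :
    wop s j (fun q => (f q)⁻¹) p = -wop s j f p / f p ^ 2 := by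
  have h1 : HasDerivAt (fun y : ℂ => y⁻¹) (-(f p ^ 2)⁻¹) (f p) := hasDerivAt_inv h0
  have h2 : HasFDerivAt (fun q => (f q)⁻¹) ((-(f p ^ 2)⁻¹) • fderiv ℝ f p) p :=
    h1.comp_hasFDerivAt p hf.hasFDerivAt
  rw [wop_hasFDerivAt h2]
  unfold wop
  simp [smul_eq_mul]
  field_simp
  ring

end wopRules


section Rules
variable {n : ℕ} {s : ℂ} {j : Fin n} {p : Fin n → ℂ}

/-- chain rule through `Real.log` of a positive real-valued function. -/
lemma wop_log {u : (Fin n → ℂ) → ℝ} (hu : DifferentiableAt ℝ u p) (h0 : u p ≠ 0) :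
    wop s j (fun q => ((Real.log (u q) : ℝ) : ℂ)) p
      = ((u p : ℂ))⁻¹ * wop s j (fun q => ((u q : ℝ) : ℂ)) p := by
  have h1 : HasFDerivAt (Real.log ∘ u) ((u p)⁻¹ • fderiv ℝ u p) p :=
    (Real.hasDerivAt_log h0).comp_hasFDerivAt p hu.hasFDerivAt
  have h2 : HasFDerivAt (fun q => ((Real.log (u q) : ℝ) : ℂ))
      (Complex.ofRealCLM.comp ((u p)⁻¹ • fderiv ℝ u p)) p :=
    (Complex.ofRealCLM.hasFDerivAt.comp p h1 : )
  have h3 : HasFDerivAt (fun q => ((u q : ℝ) : ℂ))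
      (Complex.ofRealCLM.comp (fderiv ℝ u p)) p :=
    (Complex.ofRealCLM.hasFDerivAt.comp p hu.hasFDerivAt : )
  rw [wop_hasFDerivAt h2, wop_hasFDerivAt h3]
  simp [smul_eq_mul]
  push_cast
  ring

/-- coordinate rules -/
lemma wop_coord (k : Fin n) :
    wop s j (fun q => q k) p = (if k = j then (1 + s * Complex.I) / 2 else 0) := by
  have h : HasFDerivAt (fun q : Fin n → ℂ => q k)
      (ContinuousLinearMap.proj (R := ℝ) (φ := fun _ : Fin n => ℂ) k) p :=
    ((ContinuousLinearMap.proj (R := ℝ) (φ := fun _ : Fin n => ℂ) k).hasFDerivAt : )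
  rw [wop_hasFDerivAt h]
  by_cases hk : k = j <;> simp [hk, Pi.single_apply] <;> ring

lemma wop_conj_coord (k : Fin n) :
    wop s j (fun q => (starRingEnd ℂ) (q k)) p
      = (if k = j then (1 - s * Complex.I) / 2 else 0) := by
  have h : HasFDerivAt (fun q : Fin n → ℂ => (starRingEnd ℂ) (q k))
      ((Complex.conjCLE.toContinuousLinearMap).comp
        (ContinuousLinearMap.proj (R := ℝ) (φ := fun _ : Fin n => ℂ) k)) p := by
    exact ((Complex.conjCLE.toContinuousLinearMap).hasFDerivAt.comp p
      (ContinuousLinearMap.proj k).hasFDerivAt : )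
  rw [wop_hasFDerivAt h]
  by_cases hk : k = j <;> simp [hk, Pi.single_apply] <;> ring_nf <;>
    simp [Complex.conj_I] <;> ring

end Rules
variable {d : ℕ}


/-- the projection `ℂ^{d+1} → ℂ^d` forgetting the last coordinate, as a CLM. -/
def piL (d : ℕ) : (Fin (d + 1) → ℂ) →L[ℝ] (Fin d → ℂ) :=
  ContinuousLinearMap.pi fun j : Fin d =>
    ContinuousLinearMap.proj (R := ℝ) (φ := fun _ : Fin (d + 1) => ℂ) j.castSucc

lemma piL_apply (p : Fin (d + 1) → ℂ) : piL d p = fun j => p j.castSucc := rfl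

lemma piL_single_castSucc (k : Fin d) (c : ℂ) :
    piL d (Pi.single (Fin.castSucc k) c) = Pi.single k c := by
  funext j
  simp only [piL_apply, Pi.single_apply]
  simp [Fin.castSucc_inj, eq_comm]

lemma piL_single_last (c : ℂ) : piL d (Pi.single (Fin.last d) c) = 0 := by
  funext j
  simp only [piL_apply, Pi.single_apply]
  simp [(Fin.castSucc_lt_last j).ne]

lemma wop_comp_piL_castSucc {s : ℂ} {f : (Fin d → ℂ) → ℂ} {p : Fin (d + 1) → ℂ} (k : Fin d)
    (hf : DifferentiableAt ℝ f (piL d p)) :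
    wop s (Fin.castSucc k) (fun q => f (piL d q)) p = wop s k f (piL d p) := by
  have h : HasFDerivAt (fun q => f (piL d q)) ((fderiv ℝ f (piL d p)).comp (piL d)) p :=
    (hf.hasFDerivAt.comp p (piL d).hasFDerivAt : )
  rw [wop_hasFDerivAt h]
  unfold wop
  simp [piL_single_castSucc]

lemma wop_comp_piL_last {s : ℂ} {f : (Fin d → ℂ) → ℂ} {p : Fin (d + 1) → ℂ}
    (hf : DifferentiableAt ℝ f (piL d p)) :
    wop s (Fin.last d) (fun q => f (piL d q)) p = 0 := by
  have h : HasFDerivAt (fun q => f (piL d q)) ((fderiv ℝ f (piL d p)).comp (piL d)) p :=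
    (hf.hasFDerivAt.comp p (piL d).hasFDerivAt : )
  rw [wop_hasFDerivAt h]
  simp [piL_single_last]

/-- smoothness of `wop` -/
lemma wop_contDiffOn {n : ℕ} {s : ℂ} {j : Fin n} {f : (Fin n → ℂ) → ℂ} {U : Set (Fin n → ℂ)}
    (hU : IsOpen U) (hf : ContDiffOn ℝ (⊤ : ℕ∞) f U) : ContDiffOn ℝ (⊤ : ℕ∞) (wop s j f) U := by
  have h1 : ContDiffOn ℝ (⊤ : ℕ∞) (fderiv ℝ f) U := hf.fderiv_of_isOpen hU (by simp)
  have h2 : ∀ v : Fin n → ℂ, ContDiffOn ℝ (⊤ : ℕ∞) (fun p => fderiv ℝ f p v) U :=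
    fun v => h1.clm_apply contDiffOn_const
  exact contDiffOn_const.mul (((h2 _)).add (contDiffOn_const.mul (h2 _)))

lemma wop_differentiableAt {n : ℕ} {s : ℂ} {j : Fin n} {f : (Fin n → ℂ) → ℂ}
    {U : Set (Fin n → ℂ)} {p : Fin n → ℂ}
    (hU : IsOpen U) (hf : ContDiffOn ℝ (⊤ : ℕ∞) f U) (hp : p ∈ U) :
    DifferentiableAt ℝ (wop s j f) p :=
  ((wop_contDiffOn hU hf).contDiffAt (hU.mem_nhds hp)).differentiableAt (by simp)

lemma diffAt_of_contDiffOn {E F : Type*} [NormedAddCommGroup E] [NormedSpace ℝ E]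
    [NormedAddCommGroup F] [NormedSpace ℝ F] {f : E → F} {U : Set E} {p : E}
    (hU : IsOpen U) (hf : ContDiffOn ℝ (⊤ : ℕ∞) f U) (hp : p ∈ U) : DifferentiableAt ℝ f p :=
  (hf.contDiffAt (hU.mem_nhds hp)).differentiableAt (by simp)

/-- commutation of two `wop`s on a smooth function -/
lemma wop_comm {n : ℕ} {f : (Fin n → ℂ) → ℂ} {U : Set (Fin n → ℂ)} {p : Fin n → ℂ}
    (hU : IsOpen U) (hf : ContDiffOn ℝ (⊤ : ℕ∞) f U) (hp : p ∈ U) (s t : ℂ) (j k : Fin n) :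
    wop s j (wop t k f) p = wop t k (wop s j f) p := by
  have hd1 : ContDiffOn ℝ (⊤ : ℕ∞) (fderiv ℝ f) U := hf.fderiv_of_isOpen hU (by simp)
  have hdd : DifferentiableAt ℝ (fderiv ℝ f) p :=
    (hd1.contDiffAt (hU.mem_nhds hp)).differentiableAt (by simp)
  set f'' := fderiv ℝ (fderiv ℝ f) p with hf''
  have hsymm : ∀ v w, f'' v w = f'' w v := by
    apply second_derivative_symmetric_of_eventually
    · filter_upwards [hU.mem_nhds hp] with q hq
      exact (diffAt_of_contDiffOn hU hf hq).hasFDerivAt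
    · exact hdd.hasFDerivAt
  have key : ∀ v, fderiv ℝ (fun q => fderiv ℝ f q v) p = f''.flip v := by
    intro v
    rw [fderiv_clm_apply hdd (differentiableAt_const v)]
    simp [hf'']
  have hdv : ∀ v : Fin n → ℂ, DifferentiableAt ℝ (fun q => fderiv ℝ f q v) p :=
    fun v => hdd.clm_apply (differentiableAt_const v)
  have expand : ∀ (a b : ℂ) (i l : Fin n), wop a i (wop b l f) p
      = (1/4 : ℂ) * (f'' (Pi.single i 1) (Pi.single l 1)
        + b * f'' (Pi.single i 1) (Pi.single l Complex.I)
        + a * f'' (Pi.single i Complex.I) (Pi.single l 1)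
        + a * b * f'' (Pi.single i Complex.I) (Pi.single l Complex.I)) := by
    intro a b i l
    unfold wop
    rw [show (fun p => (1/2:ℂ) * (fderiv ℝ f p (Pi.single l 1)
          + b * fderiv ℝ f p (Pi.single l Complex.I)))
        = fun p => (1/2:ℂ) * ((fun q => fderiv ℝ f q (Pi.single l 1)) p
          + b * (fun q => fderiv ℝ f q (Pi.single l Complex.I)) p) from rfl]
    rw [fderiv_const_mul (((hdv _)).fun_add ((hdv _).const_mul b)),
        fderiv_fun_add (hdv _) ((hdv _).const_mul b),
        fderiv_const_mul (hdv _) b, key, key]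
    simp [smul_eq_mul]
    ring
  rw [expand, expand]
  rw [hsymm (Pi.single j 1) (Pi.single k Complex.I),
      hsymm (Pi.single j 1) (Pi.single k 1),
      hsymm (Pi.single j Complex.I) (Pi.single k Complex.I),
      hsymm (Pi.single j Complex.I) (Pi.single k 1)]
  ring
end Toolkit
noncomputable section Setup

variable {d : ℕ} {μ : ℝ} {N : (Fin d → ℂ) → ℝ} {Ω : Set (Fin d → ℂ)}

/-- bundled standing hypotheses -/
structure CHS (d : ℕ) (μ : ℝ) (N : (Fin d → ℂ) → ℝ) (Ω : Set (Fin d → ℂ)) : Prop where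
  hΩ : IsOpen Ω
  hNsm : ContDiffOn ℝ (⊤ : ℕ∞) N Ω
  hNpos : ∀ z ∈ Ω, 0 < N z

/-- the real function `u(z,w) = N(z)^μ - |w|²`. -/
def uRf (d : ℕ) (μ : ℝ) (N : (Fin d → ℂ) → ℝ) : (Fin (d + 1) → ℂ) → ℝ :=
  fun p => N (piL d p) ^ μ - ‖p (Fin.last d)‖ ^ 2

/-- `u` as a complex-valued function. -/
def uCf (d : ℕ) (μ : ℝ) (N : (Fin d → ℂ) → ℝ) : (Fin (d + 1) → ℂ) → ℂ :=
  fun p => ((uRf d μ N p : ℝ) : ℂ)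

/-- the neighbourhood on which all computations happen. -/
def Udom (d : ℕ) (μ : ℝ) (N : (Fin d → ℂ) → ℝ) (Ω : Set (Fin d → ℂ)) :
    Set (Fin (d + 1) → ℂ) :=
  {p | piL d p ∈ Ω ∧ 0 < uRf d μ N p}

lemma uCf_eq : uCf d μ N = fun p => NmuC d μ N (piL d p) - p (Fin.last d) *
    (starRingEnd ℂ) (p (Fin.last d)) := by
  funext p
  simp only [uCf, uRf, NmuC, Complex.mul_conj]
  push_cast [Complex.sq_norm]
  ring

lemma CHS.rpow_contDiffOn (S : CHS d μ N Ω) : ContDiffOn ℝ (⊤ : ℕ∞) (fun z => N z ^ μ) Ω := by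
  intro z hz
  exact ((S.hNsm.contDiffAt (S.hΩ.mem_nhds hz)).rpow_const_of_ne
    (S.hNpos z hz).ne').contDiffWithinAt

lemma CHS.NmuC_contDiffOn (S : CHS d μ N Ω) : ContDiffOn ℝ (⊤ : ℕ∞) (NmuC d μ N) Ω :=
  Complex.ofRealCLM.contDiff.comp_contDiffOn S.rpow_contDiffOn

lemma contDiff_abs_sq :
    ContDiff ℝ (⊤ : ℕ∞) (fun p : Fin (d + 1) → ℂ => ‖p (Fin.last d)‖ ^ 2) := by
  have h : (fun p : Fin (d + 1) → ℂ => ‖p (Fin.last d)‖ ^ 2)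
      = fun p => (Complex.reCLM ((ContinuousLinearMap.proj (R := ℝ)
          (φ := fun _ : Fin (d + 1) => ℂ) (Fin.last d)) p)) ^ 2
        + (Complex.imCLM ((ContinuousLinearMap.proj (R := ℝ)
          (φ := fun _ : Fin (d + 1) => ℂ) (Fin.last d)) p)) ^ 2 := by
    funext p
    simp [Complex.sq_norm, Complex.normSq_apply]
    ring
  rw [h]
  exact ((Complex.reCLM.contDiff.comp (ContinuousLinearMap.proj (R := ℝ)
      (φ := fun _ : Fin (d + 1) => ℂ) (Fin.last d)).contDiff).pow 2).add
    ((Complex.imCLM.contDiff.comp (ContinuousLinearMap.proj (R := ℝ)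
      (φ := fun _ : Fin (d + 1) => ℂ) (Fin.last d)).contDiff).pow 2)

lemma CHS.uR_contDiffOn (S : CHS d μ N Ω) :
    ContDiffOn ℝ (⊤ : ℕ∞) (uRf d μ N) ((piL d) ⁻¹' Ω) := by
  have h1 : ContDiffOn ℝ (⊤ : ℕ∞) (fun p => N (piL d p) ^ μ) ((piL d) ⁻¹' Ω) :=
    S.rpow_contDiffOn.comp ((piL d).contDiff).contDiffOn (fun p hp => hp)
  exact h1.sub contDiff_abs_sq.contDiffOn

lemma CHS.isOpen_Udom (S : CHS d μ N Ω) : IsOpen (Udom d μ N Ω) := by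
  have hW : IsOpen ((piL d) ⁻¹' Ω) := S.hΩ.preimage (piL d).continuous
  have := S.uR_contDiffOn.continuousOn.isOpen_inter_preimage hW (isOpen_Ioi (a := (0:ℝ)))
  exact this

lemma CHS.uC_contDiffOn (S : CHS d μ N Ω) :
    ContDiffOn ℝ (⊤ : ℕ∞) (uCf d μ N) ((piL d) ⁻¹' Ω) :=
  Complex.ofRealCLM.contDiff.comp_contDiffOn S.uR_contDiffOn

lemma Udom_subset : Udom d μ N Ω ⊆ (piL d) ⁻¹' Ω := fun p hp => hp.1

lemma CHS.uC_contDiffOn_U (S : CHS d μ N Ω) : ContDiffOn ℝ (⊤ : ℕ∞) (uCf d μ N) (Udom d μ N Ω) :=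
  S.uC_contDiffOn.mono Udom_subset

lemma CHS.uC_diffAt (S : CHS d μ N Ω) {p} (hp : p ∈ Udom d μ N Ω) :
    DifferentiableAt ℝ (uCf d μ N) p :=
  diffAt_of_contDiffOn S.isOpen_Udom S.uC_contDiffOn_U hp

lemma uC_ne {p} (hp : p ∈ Udom d μ N Ω) : uCf d μ N p ≠ 0 := by
  have := hp.2
  simp only [uCf, ne_eq, Complex.ofReal_eq_zero]
  exact this.ne'

/-- differentiability of compositions with `piL` -/
lemma CHS.diffAt_comp_piL (S : CHS d μ N Ω) {f : (Fin d → ℂ) → ℂ}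
    (hf : ContDiffOn ℝ (⊤ : ℕ∞) f Ω) {p} (hp : p ∈ Udom d μ N Ω) :
    DifferentiableAt ℝ (fun q => f (piL d q)) p := by
  have h1 : DifferentiableAt ℝ f (piL d p) := diffAt_of_contDiffOn S.hΩ hf hp.1
  exact h1.comp p (piL d).differentiableAt

lemma diffAt_coord {n : ℕ} (k : Fin n) (p : Fin n → ℂ) :
    DifferentiableAt ℝ (fun q : Fin n → ℂ => q k) p :=
  (ContinuousLinearMap.proj (R := ℝ) (φ := fun _ : Fin n => ℂ) k).differentiableAt

lemma diffAt_conj_coord {n : ℕ} (k : Fin n) (p : Fin n → ℂ) :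
    DifferentiableAt ℝ (fun q : Fin n → ℂ => (starRingEnd ℂ) (q k)) p :=
  ((Complex.conjCLE.toContinuousLinearMap).comp
    (ContinuousLinearMap.proj (R := ℝ) (φ := fun _ : Fin n => ℂ) k)).differentiableAt

end Setup
noncomputable section Atoms

variable {d : ℕ} {μ : ℝ} {N : (Fin d → ℂ) → ℝ} {Ω : Set (Fin d → ℂ)}
  {p : Fin (d + 1) → ℂ} {s : ℂ}

/-- `1/u` as a function -/
def ivf (d : ℕ) (μ : ℝ) (N : (Fin d → ℂ) → ℝ) : (Fin (d + 1) → ℂ) → ℂ :=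
  fun p => (uCf d μ N p)⁻¹

lemma CHS.iv_contDiffOn (S : CHS d μ N Ω) : ContDiffOn ℝ (⊤ : ℕ∞) (ivf d μ N) (Udom d μ N Ω) :=
  S.uC_contDiffOn_U.inv (fun p hp => uC_ne hp)

lemma CHS.iv_diffAt (S : CHS d μ N Ω) (hp : p ∈ Udom d μ N Ω) :
    DifferentiableAt ℝ (ivf d μ N) p :=
  diffAt_of_contDiffOn S.isOpen_Udom S.iv_contDiffOn hp

lemma CHS.wop_iv (S : CHS d μ N Ω) (hp : p ∈ Udom d μ N Ω) (j : Fin (d + 1)) :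
    wop s j (ivf d μ N) p = -wop s j (uCf d μ N) p * ivf d μ N p ^ 2 := by
  have h := wop_inv (s := s) (j := j) (S.uC_diffAt hp) (uC_ne hp)
  have e : ivf d μ N = fun q => (uCf d μ N q)⁻¹ := rfl
  rw [e, h, div_eq_mul_inv, ← inv_pow, neg_mul]

/-- Wirtinger derivatives of `uCf` -/
lemma CHS.wop_uC_castSucc (S : CHS d μ N Ω) (hp : p ∈ Udom d μ N Ω) (k : Fin d) :
    wop s (Fin.castSucc k) (uCf d μ N) p = wop s k (NmuC d μ N) (piL d p) := by
  rw [uCf_eq]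
  have hV : DifferentiableAt ℝ (NmuC d μ N) (piL d p) :=
    diffAt_of_contDiffOn S.hΩ S.NmuC_contDiffOn hp.1
  rw [wop_sub (S.diffAt_comp_piL S.NmuC_contDiffOn hp)
    ((diffAt_coord _ p).fun_mul (diffAt_conj_coord _ p)),
    wop_comp_piL_castSucc k hV, wop_mul (diffAt_coord _ p) (diffAt_conj_coord _ p),
    wop_coord, wop_conj_coord]
  have hne : Fin.last d ≠ Fin.castSucc k := (Fin.castSucc_lt_last k).ne'
  simp [hne]

lemma CHS.wop_uC_last (S : CHS d μ N Ω) (hp : p ∈ Udom d μ N Ω) :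
    wop s (Fin.last d) (uCf d μ N) p
      = -((1 + s * Complex.I) / 2 * (starRingEnd ℂ) (p (Fin.last d))
          + (1 - s * Complex.I) / 2 * p (Fin.last d)) := by
  rw [uCf_eq]
  have hV : DifferentiableAt ℝ (NmuC d μ N) (piL d p) :=
    diffAt_of_contDiffOn S.hΩ S.NmuC_contDiffOn hp.1
  rw [wop_sub (S.diffAt_comp_piL S.NmuC_contDiffOn hp)
    ((diffAt_coord _ p).fun_mul (diffAt_conj_coord _ p)),
    wop_comp_piL_last hV, wop_mul (diffAt_coord _ p) (diffAt_conj_coord _ p),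
    wop_coord, wop_conj_coord]
  simp
  ring

lemma CHS.wD_uC_last (S : CHS d μ N Ω) (hp : p ∈ Udom d μ N Ω) :
    wop (-Complex.I) (Fin.last d) (uCf d μ N) p = -(starRingEnd ℂ) (p (Fin.last d)) := by
  rw [S.wop_uC_last hp]
  have h1 : ((1 : ℂ) + -Complex.I * Complex.I) / 2 = 1 := by
    norm_num [Complex.I_mul_I]
  have h2 : ((1 : ℂ) - -Complex.I * Complex.I) / 2 = 0 := by
    norm_num [Complex.I_mul_I]
  rw [h1, h2]
  ring

lemma CHS.wDbar_uC_last (S : CHS d μ N Ω) (hp : p ∈ Udom d μ N Ω) :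
    wop Complex.I (Fin.last d) (uCf d μ N) p = -p (Fin.last d) := by
  rw [S.wop_uC_last hp]
  have h1 : ((1 : ℂ) + Complex.I * Complex.I) / 2 = 0 := by
    norm_num [Complex.I_mul_I]
  have h2 : ((1 : ℂ) - Complex.I * Complex.I) / 2 = 1 := by
    norm_num [Complex.I_mul_I]
  rw [h1, h2]
  ring

/-- derivative of the potential -/
lemma CHS.wop_CHpot (S : CHS d μ N Ω) (hp : p ∈ Udom d μ N Ω) (β : Fin (d + 1)) :
    wop s β (CHpot d μ N) p = -((uCf d μ N p)⁻¹ * wop s β (uCf d μ N) p) := by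
  have hCH : CHpot d μ N = fun q => -((Real.log (uRf d μ N q) : ℝ) : ℂ) := rfl
  have hu : DifferentiableAt ℝ (uRf d μ N) p :=
    diffAt_of_contDiffOn (S.hΩ.preimage (piL d).continuous) S.uR_contDiffOn hp.1
  rw [hCH, wop_neg, wop_log hu hp.2.ne']
  rfl
end Atoms
noncomputable section Level12

variable {d : ℕ} {μ : ℝ} {N : (Fin d → ℂ) → ℝ} {Ω : Set (Fin d → ℂ)}
  {p : Fin (d + 1) → ℂ} {s : ℂ}

lemma CHS.evU (S : CHS d μ N Ω) (hp : p ∈ Udom d μ N Ω) {f g : (Fin (d + 1) → ℂ) → ℂ}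
    (h : ∀ q ∈ Udom d μ N Ω, f q = g q) : f =ᶠ[nhds p] g :=
  Filter.eventuallyEq_of_mem (S.isOpen_Udom.mem_nhds hp) h

lemma CHS.wop_iv_cs (S : CHS d μ N Ω) (hp : p ∈ Udom d μ N Ω) (k : Fin d) :
    wop s (Fin.castSucc k) (ivf d μ N) p
      = -wop s k (NmuC d μ N) (piL d p) * ivf d μ N p ^ 2 := by
  rw [S.wop_iv hp, S.wop_uC_castSucc hp]

lemma CHS.wD_iv_last (S : CHS d μ N Ω) (hp : p ∈ Udom d μ N Ω) :
    wop (-Complex.I) (Fin.last d) (ivf d μ N) p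
      = (starRingEnd ℂ) (p (Fin.last d)) * ivf d μ N p ^ 2 := by
  rw [S.wop_iv hp, S.wD_uC_last hp]; ring

lemma CHS.wDbar_iv_last (S : CHS d μ N Ω) (hp : p ∈ Udom d μ N Ω) :
    wop Complex.I (Fin.last d) (ivf d μ N) p = p (Fin.last d) * ivf d μ N p ^ 2 := by
  rw [S.wop_iv hp, S.wDbar_uC_last hp]; ring

/-- level 1 : first derivatives of the potential -/
lemma CHS.pot_bar_last (S : CHS d μ N Ω) (hp : p ∈ Udom d μ N Ω) :
    wDbar (Fin.last d) (CHpot d μ N) p = p (Fin.last d) * ivf d μ N p := by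
  rw [wDbar_eq_wop, S.wop_CHpot hp, S.wDbar_uC_last hp, ivf]; ring

lemma CHS.pot_bar_cs (S : CHS d μ N Ω) (hp : p ∈ Udom d μ N Ω) (l : Fin d) :
    wDbar (Fin.castSucc l) (CHpot d μ N) p
      = -(wop Complex.I l (NmuC d μ N) (piL d p) * ivf d μ N p) := by
  rw [wDbar_eq_wop, S.wop_CHpot hp, S.wop_uC_castSucc hp, ivf]; ring

/-- smoothness of z-derivatives of `NmuC` composed with the projection -/
lemma CHS.VC_wop_sm (S : CHS d μ N Ω) (t : ℂ) (l : Fin d) :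
    ContDiffOn ℝ (⊤ : ℕ∞) (wop t l (NmuC d μ N)) Ω :=
  wop_contDiffOn S.hΩ S.NmuC_contDiffOn

lemma CHS.dVπ (S : CHS d μ N Ω) (hp : p ∈ Udom d μ N Ω) :
    DifferentiableAt ℝ (fun q => NmuC d μ N (piL d q)) p :=
  S.diffAt_comp_piL S.NmuC_contDiffOn hp

lemma CHS.dVπ' (S : CHS d μ N Ω) (hp : p ∈ Udom d μ N Ω) (t : ℂ) (l : Fin d) :
    DifferentiableAt ℝ (fun q => wop t l (NmuC d μ N) (piL d q)) p :=
  S.diffAt_comp_piL (S.VC_wop_sm t l) hp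

/-- level 2 : the metric components on `U` -/
lemma CHS.gCH_ww (S : CHS d μ N Ω) (hp : p ∈ Udom d μ N Ω) :
    gCH d μ N (Fin.last d) (Fin.last d) p
      = NmuC d μ N (piL d p) * ivf d μ N p ^ 2 := by
  have hev : wDbar (Fin.last d) (CHpot d μ N)
      =ᶠ[nhds p] fun q => q (Fin.last d) * ivf d μ N q :=
    S.evU hp (fun q hq => S.pot_bar_last hq)
  have : gCH d μ N (Fin.last d) (Fin.last d) p
      = wop (-Complex.I) (Fin.last d) (wDbar (Fin.last d) (CHpot d μ N)) p := by
    rw [gCH, wD_eq_wop]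
  rw [this, wop_congr hev,
    wop_mul (diffAt_coord _ p) (S.iv_diffAt hp), wop_coord, S.wD_iv_last hp]
  have h2 : NmuC d μ N (piL d p) = uCf d μ N p
      + p (Fin.last d) * (starRingEnd ℂ) (p (Fin.last d)) := by
    rw [uCf_eq]; ring
  rw [h2]
  have h3 : ivf d μ N p * uCf d μ N p = 1 := inv_mul_cancel₀ (uC_ne hp)
  simp only [ivf] at h3 ⊢
  have h4 : uCf d μ N p * (uCf d μ N p)⁻¹ ^ 2 = (uCf d μ N p)⁻¹ := by
    rw [sq, ← mul_assoc, mul_inv_cancel₀ (uC_ne hp), one_mul]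
  norm_num [Complex.I_mul_I]
  have h5 : uCf d μ N p * (uCf d μ N p ^ 2)⁻¹ = (uCf d μ N p)⁻¹ := by
    rw [sq, mul_inv, ← mul_assoc, mul_inv_cancel₀ (uC_ne hp), one_mul]
  rw [add_mul, h5]
  ring

lemma CHS.gCH_wl (S : CHS d μ N Ω) (hp : p ∈ Udom d μ N Ω) (l : Fin d) :
    gCH d μ N (Fin.last d) (Fin.castSucc l) p
      = -(wop Complex.I l (NmuC d μ N) (piL d p)
          * (starRingEnd ℂ) (p (Fin.last d)) * ivf d μ N p ^ 2) := by
  have hev : wDbar (Fin.castSucc l) (CHpot d μ N)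
      =ᶠ[nhds p] fun q => -(wop Complex.I l (NmuC d μ N) (piL d q) * ivf d μ N q) :=
    S.evU hp (fun q hq => S.pot_bar_cs hq l)
  have : gCH d μ N (Fin.last d) (Fin.castSucc l) p
      = wop (-Complex.I) (Fin.last d) (wDbar (Fin.castSucc l) (CHpot d μ N)) p := by
    rw [gCH, wD_eq_wop]
  rw [this, wop_congr hev, wop_neg,
    wop_mul (S.dVπ' hp Complex.I l) (S.iv_diffAt hp),
    wop_comp_piL_last (diffAt_of_contDiffOn S.hΩ (S.VC_wop_sm Complex.I l) hp.1),
    S.wD_iv_last hp]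
  ring

lemma CHS.gCH_qw (S : CHS d μ N Ω) (hp : p ∈ Udom d μ N Ω) (q : Fin d) :
    gCH d μ N (Fin.castSucc q) (Fin.last d) p
      = -(p (Fin.last d) * wop (-Complex.I) q (NmuC d μ N) (piL d p)
          * ivf d μ N p ^ 2) := by
  have hev : wDbar (Fin.last d) (CHpot d μ N)
      =ᶠ[nhds p] fun q' => q' (Fin.last d) * ivf d μ N q' :=
    S.evU hp (fun q' hq => S.pot_bar_last hq)
  have : gCH d μ N (Fin.castSucc q) (Fin.last d) p
      = wop (-Complex.I) (Fin.castSucc q) (wDbar (Fin.last d) (CHpot d μ N)) p := by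
    rw [gCH, wD_eq_wop]
  rw [this, wop_congr hev,
    wop_mul (diffAt_coord _ p) (S.iv_diffAt hp), wop_coord, S.wop_iv_cs hp q]
  have hne : Fin.last d ≠ Fin.castSucc q := (Fin.castSucc_lt_last q).ne'
  simp [hne]
  ring

lemma CHS.gCH_ql (S : CHS d μ N Ω) (hp : p ∈ Udom d μ N Ω) (q l : Fin d) :
    gCH d μ N (Fin.castSucc q) (Fin.castSucc l) p
      = -(wop (-Complex.I) q (wop Complex.I l (NmuC d μ N)) (piL d p) * ivf d μ N p)
        + wop Complex.I l (NmuC d μ N) (piL d p)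
          * wop (-Complex.I) q (NmuC d μ N) (piL d p) * ivf d μ N p ^ 2 := by
  have hev : wDbar (Fin.castSucc l) (CHpot d μ N)
      =ᶠ[nhds p] fun q' => -(wop Complex.I l (NmuC d μ N) (piL d q') * ivf d μ N q') :=
    S.evU hp (fun q' hq => S.pot_bar_cs hq l)
  have : gCH d μ N (Fin.castSucc q) (Fin.castSucc l) p
      = wop (-Complex.I) (Fin.castSucc q) (wDbar (Fin.castSucc l) (CHpot d μ N)) p := by
    rw [gCH, wD_eq_wop]
  rw [this, wop_congr hev, wop_neg,
    wop_mul (S.dVπ' hp Complex.I l) (S.iv_diffAt hp),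
    wop_comp_piL_castSucc q (diffAt_of_contDiffOn S.hΩ (S.VC_wop_sm Complex.I l) hp.1),
    S.wop_iv_cs hp q]
  ring

end Level12
noncomputable section Level34

variable {d : ℕ} {μ : ℝ} {N : (Fin d → ℂ) → ℝ} {Ω : Set (Fin d → ℂ)}
  {p : Fin (d + 1) → ℂ} {s : ℂ} {n : ℕ} {j : Fin n} {f : (Fin n → ℂ) → ℂ}

lemma wop_sq {p : Fin n → ℂ} (hf : DifferentiableAt ℝ f p) :
    wop s j (fun q => f q ^ 2) p = 2 * f p * wop s j f p := by
  have h : (fun q => f q ^ 2) = fun q => f q * f q := by funext q; ring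
  rw [h, wop_mul hf hf]; ring

lemma wop_cube {p : Fin n → ℂ} (hf : DifferentiableAt ℝ f p) :
    wop s j (fun q => f q ^ 3) p = 3 * f p ^ 2 * wop s j f p := by
  have h : (fun q => f q ^ 3) = fun q => f q * f q ^ 2 := by funext q; ring
  rw [h, wop_mul hf (hf.fun_pow 2), wop_sq hf]; ring

/-- level 3 : `∂_k g_{ww̄}` and `∂_w g_{ww̄}` on `U` -/
lemma CHS.H1 (S : CHS d μ N Ω) (hp : p ∈ Udom d μ N Ω) (k : Fin d) :
    wop (-Complex.I) (Fin.castSucc k) (gCH d μ N (Fin.last d) (Fin.last d)) p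
      = wop (-Complex.I) k (NmuC d μ N) (piL d p) * ivf d μ N p ^ 2
        - 2 * (NmuC d μ N (piL d p) * (wop (-Complex.I) k (NmuC d μ N) (piL d p)
            * ivf d μ N p ^ 3)) := by
  have hev : gCH d μ N (Fin.last d) (Fin.last d)
      =ᶠ[nhds p] fun q => NmuC d μ N (piL d q) * ivf d μ N q ^ 2 :=
    S.evU hp (fun q hq => S.gCH_ww hq)
  rw [wop_congr hev, wop_mul (S.dVπ hp) ((S.iv_diffAt hp).fun_pow 2),
    wop_comp_piL_castSucc k (diffAt_of_contDiffOn S.hΩ S.NmuC_contDiffOn hp.1),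
    wop_sq (S.iv_diffAt hp), S.wop_iv_cs hp k]
  ring

lemma CHS.H2 (S : CHS d μ N Ω) (hp : p ∈ Udom d μ N Ω) :
    wop (-Complex.I) (Fin.last d) (gCH d μ N (Fin.last d) (Fin.last d)) p
      = 2 * (NmuC d μ N (piL d p) * ((starRingEnd ℂ) (p (Fin.last d))
          * ivf d μ N p ^ 3)) := by
  have hev : gCH d μ N (Fin.last d) (Fin.last d)
      =ᶠ[nhds p] fun q => NmuC d μ N (piL d q) * ivf d μ N q ^ 2 :=
    S.evU hp (fun q hq => S.gCH_ww hq)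
  rw [wop_congr hev, wop_mul (S.dVπ hp) ((S.iv_diffAt hp).fun_pow 2),
    wop_comp_piL_last (diffAt_of_contDiffOn S.hΩ S.NmuC_contDiffOn hp.1),
    wop_sq (S.iv_diffAt hp), S.wD_iv_last hp]
  ring

end Level34
noncomputable section Evals

variable {d : ℕ} {μ : ℝ} {N : (Fin d → ℂ) → ℝ} {Ω : Set (Fin d → ℂ)}
  {p : Fin (d + 1) → ℂ}

/-- `∂_k g_{wj̄}` at a point over `z = 0`. -/
lemma CHS.E1 (S : CHS d μ N Ω) (hp : p ∈ Udom d μ N Ω) (hz : piL d p = 0) (k j : Fin d)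
    (hVj' : wop Complex.I j (NmuC d μ N) 0 = 0) :
    wop (-Complex.I) (Fin.castSucc k) (gCH d μ N (Fin.last d) (Fin.castSucc j)) p
      = -(wop (-Complex.I) k (wop Complex.I j (NmuC d μ N)) 0
          * (starRingEnd ℂ) (p (Fin.last d)) * ivf d μ N p ^ 2) := by
  have hev : gCH d μ N (Fin.last d) (Fin.castSucc j)
      =ᶠ[nhds p] fun q => -(wop Complex.I j (NmuC d μ N) (piL d q)
        * (starRingEnd ℂ) (q (Fin.last d)) * ivf d μ N q ^ 2) :=
    S.evU hp (fun q hq => S.gCH_wl hq j)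
  rw [wop_congr hev, wop_neg,
    wop_mul ((S.dVπ' hp Complex.I j).fun_mul (diffAt_conj_coord _ p))
      ((S.iv_diffAt hp).fun_pow 2),
    wop_mul (S.dVπ' hp Complex.I j) (diffAt_conj_coord _ p),
    wop_comp_piL_castSucc k (diffAt_of_contDiffOn S.hΩ (S.VC_wop_sm Complex.I j) hp.1),
    wop_conj_coord, hz, hVj']
  have hne : Fin.last d ≠ Fin.castSucc k := (Fin.castSucc_lt_last k).ne'
  simp [hne]

/-- `∂_k g_{ww̄}` vanishes at a point over `z = 0`. -/
lemma CHS.E2 (S : CHS d μ N Ω) (hp : p ∈ Udom d μ N Ω) (hz : piL d p = 0) (k : Fin d)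
    (hVk : wop (-Complex.I) k (NmuC d μ N) 0 = 0) :
    wop (-Complex.I) (Fin.castSucc k) (gCH d μ N (Fin.last d) (Fin.last d)) p = 0 := by
  rw [S.H1 hp k, hz, hVk]
  ring

/-- `∂_w̄ g_{ql̄}` at a point over `z = 0`. -/
lemma CHS.E3 (S : CHS d μ N Ω) (hp : p ∈ Udom d μ N Ω) (hz : piL d p = 0) (q l : Fin d)
    (hVq : wop (-Complex.I) q (NmuC d μ N) 0 = 0)
    (hVl' : wop Complex.I l (NmuC d μ N) 0 = 0) :
    wop Complex.I (Fin.last d) (gCH d μ N (Fin.castSucc q) (Fin.castSucc l)) p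
      = -(p (Fin.last d) * wop (-Complex.I) q (wop Complex.I l (NmuC d μ N)) 0
          * ivf d μ N p ^ 2) := by
  have hev : gCH d μ N (Fin.castSucc q) (Fin.castSucc l)
      =ᶠ[nhds p] fun q' =>
        -(wop (-Complex.I) q (wop Complex.I l (NmuC d μ N)) (piL d q') * ivf d μ N q')
        + wop Complex.I l (NmuC d μ N) (piL d q')
          * wop (-Complex.I) q (NmuC d μ N) (piL d q') * ivf d μ N q' ^ 2 :=
    S.evU hp (fun q' hq => S.gCH_ql hq q l)
  have hBsm : ContDiffOn ℝ (⊤ : ℕ∞) (wop (-Complex.I) q (wop Complex.I l (NmuC d μ N))) Ω :=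
    wop_contDiffOn S.hΩ (S.VC_wop_sm Complex.I l)
  rw [wop_congr hev,
    wop_add ((S.diffAt_comp_piL hBsm hp).fun_mul (S.iv_diffAt hp)).fun_neg
      (((S.dVπ' hp Complex.I l).fun_mul (S.dVπ' hp (-Complex.I) q)).fun_mul
        ((S.iv_diffAt hp).fun_pow 2)),
    wop_neg, wop_mul (S.diffAt_comp_piL hBsm hp) (S.iv_diffAt hp),
    wop_comp_piL_last (diffAt_of_contDiffOn S.hΩ hBsm hp.1),
    wop_mul ((S.dVπ' hp Complex.I l).fun_mul (S.dVπ' hp (-Complex.I) q))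
      ((S.iv_diffAt hp).fun_pow 2),
    wop_mul (S.dVπ' hp Complex.I l) (S.dVπ' hp (-Complex.I) q),
    wop_comp_piL_last (diffAt_of_contDiffOn S.hΩ (S.VC_wop_sm Complex.I l) hp.1),
    wop_comp_piL_last (diffAt_of_contDiffOn S.hΩ (S.VC_wop_sm (-Complex.I) q) hp.1),
    S.wDbar_iv_last hp, hz, hVq, hVl']
  ring

/-- `∂_w̄ g_{wl̄}` vanishes at a point over `z = 0`. -/
lemma CHS.E4 (S : CHS d μ N Ω) (hp : p ∈ Udom d μ N Ω) (hz : piL d p = 0) (l : Fin d)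
    (hVl' : wop Complex.I l (NmuC d μ N) 0 = 0) :
    wop Complex.I (Fin.last d) (gCH d μ N (Fin.last d) (Fin.castSucc l)) p = 0 := by
  have hev : gCH d μ N (Fin.last d) (Fin.castSucc l)
      =ᶠ[nhds p] fun q => -(wop Complex.I l (NmuC d μ N) (piL d q)
        * (starRingEnd ℂ) (q (Fin.last d)) * ivf d μ N q ^ 2) :=
    S.evU hp (fun q hq => S.gCH_wl hq l)
  rw [wop_congr hev, wop_neg,
    wop_mul ((S.dVπ' hp Complex.I l).fun_mul (diffAt_conj_coord _ p))
      ((S.iv_diffAt hp).fun_pow 2),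
    wop_mul (S.dVπ' hp Complex.I l) (diffAt_conj_coord _ p),
    wop_comp_piL_last (diffAt_of_contDiffOn S.hΩ (S.VC_wop_sm Complex.I l) hp.1),
    hz, hVl']
  ring

/-- `∂_w g_{ww̄}` at a point over `z = 0`. -/
lemma CHS.E5 (S : CHS d μ N Ω) (hp : p ∈ Udom d μ N Ω) (hz : piL d p = 0)
    (hV0 : NmuC d μ N 0 = 1) :
    wop (-Complex.I) (Fin.last d) (gCH d μ N (Fin.last d) (Fin.last d)) p
      = 2 * (starRingEnd ℂ) (p (Fin.last d)) * ivf d μ N p ^ 3 := by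
  rw [S.H2 hp, hz, hV0]
  ring

/-- `∂_w̄ g_{ww̄}` at a point over `z = 0`. -/
lemma CHS.E6 (S : CHS d μ N Ω) (hp : p ∈ Udom d μ N Ω) (hz : piL d p = 0)
    (hV0 : NmuC d μ N 0 = 1) :
    wop Complex.I (Fin.last d) (gCH d μ N (Fin.last d) (Fin.last d)) p
      = 2 * p (Fin.last d) * ivf d μ N p ^ 3 := by
  have hev : gCH d μ N (Fin.last d) (Fin.last d)
      =ᶠ[nhds p] fun q => NmuC d μ N (piL d q) * ivf d μ N q ^ 2 :=
    S.evU hp (fun q hq => S.gCH_ww hq)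
  rw [wop_congr hev, wop_mul (S.dVπ hp) ((S.iv_diffAt hp).fun_pow 2),
    wop_comp_piL_last (diffAt_of_contDiffOn S.hΩ S.NmuC_contDiffOn hp.1),
    wop_sq (S.iv_diffAt hp), S.wDbar_iv_last hp, hz, hV0]
  ring

/-- `∂_w̄ g_{qw̄}` vanishes at a point over `z = 0`. -/
lemma CHS.E7 (S : CHS d μ N Ω) (hp : p ∈ Udom d μ N Ω) (hz : piL d p = 0) (q : Fin d)
    (hVq : wop (-Complex.I) q (NmuC d μ N) 0 = 0) :
    wop Complex.I (Fin.last d) (gCH d μ N (Fin.castSucc q) (Fin.last d)) p = 0 := by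
  have hev : gCH d μ N (Fin.castSucc q) (Fin.last d)
      =ᶠ[nhds p] fun q' => -(q' (Fin.last d)
        * wop (-Complex.I) q (NmuC d μ N) (piL d q') * ivf d μ N q' ^ 2) :=
    S.evU hp (fun q' hq => S.gCH_qw hq q)
  rw [wop_congr hev, wop_neg,
    wop_mul ((diffAt_coord _ p).fun_mul (S.dVπ' hp (-Complex.I) q))
      ((S.iv_diffAt hp).fun_pow 2),
    wop_mul (diffAt_coord _ p) (S.dVπ' hp (-Complex.I) q),
    wop_comp_piL_last (diffAt_of_contDiffOn S.hΩ (S.VC_wop_sm (-Complex.I) q) hp.1),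
    wop_coord, hz, hVq]
  simp

/-- `∂_w g_{wj̄}` vanishes at a point over `z = 0`. -/
lemma CHS.E8 (S : CHS d μ N Ω) (hp : p ∈ Udom d μ N Ω) (hz : piL d p = 0) (j : Fin d)
    (hVj' : wop Complex.I j (NmuC d μ N) 0 = 0) :
    wop (-Complex.I) (Fin.last d) (gCH d μ N (Fin.last d) (Fin.castSucc j)) p = 0 := by
  have hev : gCH d μ N (Fin.last d) (Fin.castSucc j)
      =ᶠ[nhds p] fun q => -(wop Complex.I j (NmuC d μ N) (piL d q)
        * (starRingEnd ℂ) (q (Fin.last d)) * ivf d μ N q ^ 2) :=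
    S.evU hp (fun q hq => S.gCH_wl hq j)
  rw [wop_congr hev, wop_neg,
    wop_mul ((S.dVπ' hp Complex.I j).fun_mul (diffAt_conj_coord _ p))
      ((S.iv_diffAt hp).fun_pow 2),
    wop_mul (S.dVπ' hp Complex.I j) (diffAt_conj_coord _ p),
    wop_comp_piL_last (diffAt_of_contDiffOn S.hΩ (S.VC_wop_sm Complex.I j) hp.1),
    hz, hVj']
  ring

/-- `∂_l̄ ∂_k g_{ww̄}` at a point over `z = 0`. -/
lemma CHS.M1 (S : CHS d μ N Ω) (hp : p ∈ Udom d μ N Ω) (hz : piL d p = 0) (k l : Fin d)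
    (hVk : wop (-Complex.I) k (NmuC d μ N) 0 = 0) (hV0 : NmuC d μ N 0 = 1) :
    wop Complex.I (Fin.castSucc l)
        (wop (-Complex.I) (Fin.castSucc k) (gCH d μ N (Fin.last d) (Fin.last d))) p
      = wop Complex.I l (wop (-Complex.I) k (NmuC d μ N)) 0 * ivf d μ N p ^ 2
        - 2 * (wop Complex.I l (wop (-Complex.I) k (NmuC d μ N)) 0 * ivf d μ N p ^ 3) := by
  have hVksm : ContDiffOn ℝ (⊤ : ℕ∞) (wop (-Complex.I) k (NmuC d μ N)) Ω :=
    S.VC_wop_sm (-Complex.I) k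
  have hev : wop (-Complex.I) (Fin.castSucc k) (gCH d μ N (Fin.last d) (Fin.last d))
      =ᶠ[nhds p] fun q =>
        wop (-Complex.I) k (NmuC d μ N) (piL d q) * ivf d μ N q ^ 2
        - 2 * (NmuC d μ N (piL d q) * (wop (-Complex.I) k (NmuC d μ N) (piL d q)
            * ivf d μ N q ^ 3)) :=
    S.evU hp (fun q hq => S.H1 hq k)
  rw [wop_congr hev,
    wop_sub ((S.dVπ' hp (-Complex.I) k).fun_mul ((S.iv_diffAt hp).fun_pow 2))
      (((S.dVπ hp).fun_mul ((S.dVπ' hp (-Complex.I) k).fun_mul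
        ((S.iv_diffAt hp).fun_pow 3))).const_mul 2),
    wop_mul (S.dVπ' hp (-Complex.I) k) ((S.iv_diffAt hp).fun_pow 2),
    wop_comp_piL_castSucc l (diffAt_of_contDiffOn S.hΩ hVksm hp.1),
    wop_const_mul 2 ((S.dVπ hp).fun_mul ((S.dVπ' hp (-Complex.I) k).fun_mul
      ((S.iv_diffAt hp).fun_pow 3))),
    wop_mul (S.dVπ hp) ((S.dVπ' hp (-Complex.I) k).fun_mul ((S.iv_diffAt hp).fun_pow 3)),
    wop_mul (S.dVπ' hp (-Complex.I) k) ((S.iv_diffAt hp).fun_pow 3),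
    wop_comp_piL_castSucc l (diffAt_of_contDiffOn S.hΩ S.NmuC_contDiffOn hp.1),
    wop_comp_piL_castSucc l (diffAt_of_contDiffOn S.hΩ hVksm hp.1),
    hz, hVk, hV0]
  ring

/-- `∂_w̄ ∂_w g_{ww̄}` at a point over `z = 0`. -/
lemma CHS.M2 (S : CHS d μ N Ω) (hp : p ∈ Udom d μ N Ω) (hz : piL d p = 0)
    (hV0 : NmuC d μ N 0 = 1) :
    wop Complex.I (Fin.last d)
        (wop (-Complex.I) (Fin.last d) (gCH d μ N (Fin.last d) (Fin.last d))) p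
      = 2 * ivf d μ N p ^ 3
        + 6 * (p (Fin.last d) * (starRingEnd ℂ) (p (Fin.last d))) * ivf d μ N p ^ 4 := by
  have hev : wop (-Complex.I) (Fin.last d) (gCH d μ N (Fin.last d) (Fin.last d))
      =ᶠ[nhds p] fun q => 2 * (NmuC d μ N (piL d q) * ((starRingEnd ℂ) (q (Fin.last d))
          * ivf d μ N q ^ 3)) :=
    S.evU hp (fun q hq => S.H2 hq)
  rw [wop_congr hev,
    wop_const_mul 2 ((S.dVπ hp).fun_mul ((diffAt_conj_coord _ p).fun_mul
      ((S.iv_diffAt hp).fun_pow 3))),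
    wop_mul (S.dVπ hp) ((diffAt_conj_coord _ p).fun_mul ((S.iv_diffAt hp).fun_pow 3)),
    wop_mul (diffAt_conj_coord _ p) ((S.iv_diffAt hp).fun_pow 3),
    wop_comp_piL_last (diffAt_of_contDiffOn S.hΩ S.NmuC_contDiffOn hp.1),
    wop_cube (S.iv_diffAt hp), S.wDbar_iv_last hp, wop_conj_coord, hz, hV0]
  simp
  ring

/-- values of the metric at a point over `z = 0`. -/
lemma CHS.P1 (S : CHS d μ N Ω) (hp : p ∈ Udom d μ N Ω) (hz : piL d p = 0) (j q : Fin d)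
    (hVj : wop (-Complex.I) j (NmuC d μ N) 0 = 0) :
    gCH d μ N (Fin.castSucc j) (Fin.castSucc q) p
      = -(wop (-Complex.I) j (wop Complex.I q (NmuC d μ N)) 0 * ivf d μ N p) := by
  rw [S.gCH_ql hp j q, hz, hVj]
  ring

lemma CHS.P2 (S : CHS d μ N Ω) (hp : p ∈ Udom d μ N Ω) (hz : piL d p = 0) (j : Fin d)
    (hVj : wop (-Complex.I) j (NmuC d μ N) 0 = 0) :
    gCH d μ N (Fin.castSucc j) (Fin.last d) p = 0 := by
  rw [S.gCH_qw hp j, hz, hVj]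
  ring

lemma CHS.P3 (S : CHS d μ N Ω) (hp : p ∈ Udom d μ N Ω) (hz : piL d p = 0) (q : Fin d)
    (hVq' : wop Complex.I q (NmuC d μ N) 0 = 0) :
    gCH d μ N (Fin.last d) (Fin.castSucc q) p = 0 := by
  rw [S.gCH_wl hp q, hz, hVq']
  ring

lemma CHS.P4 (S : CHS d μ N Ω) (hp : p ∈ Udom d μ N Ω) (hz : piL d p = 0)
    (hV0 : NmuC d μ N 0 = 1) :
    gCH d μ N (Fin.last d) (Fin.last d) p = ivf d μ N p ^ 2 := by
  rw [S.gCH_ww hp, hz, hV0, one_mul]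

/-- the matrix `g^{Ω(μ)}` at `0`. -/
lemma CHS.gOm0 (S : CHS d μ N Ω) (h0 : (0 : Fin d → ℂ) ∈ Ω) (hN0 : N 0 = 1)
    (j k : Fin d) (hVk' : wop Complex.I k (NmuC d μ N) 0 = 0) :
    gOm d μ N j k 0 = -(wop (-Complex.I) j (wop Complex.I k (NmuC d μ N)) 0) := by
  have hV0 : NmuC d μ N 0 = 1 := by simp [NmuC, hN0]
  have hev : wDbar k (fun y => ((Real.log (N y ^ μ) : ℝ) : ℂ))
      =ᶠ[nhds (0 : Fin d → ℂ)] fun z => (NmuC d μ N z)⁻¹ * wop Complex.I k (NmuC d μ N) z := by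
    apply Filter.eventuallyEq_of_mem (S.hΩ.mem_nhds h0)
    intro z hzΩ
    have hu : DifferentiableAt ℝ (fun y => N y ^ μ) z :=
      diffAt_of_contDiffOn S.hΩ S.rpow_contDiffOn hzΩ
    have : wDbar k (fun y => ((Real.log (N y ^ μ) : ℝ) : ℂ)) z
        = wop Complex.I k (fun y => ((Real.log (N y ^ μ) : ℝ) : ℂ)) z := by
      rw [wDbar_eq_wop]
    rw [this, wop_log hu ((Real.rpow_pos_of_pos (S.hNpos z hzΩ) μ).ne')]
    rfl
  have hNinv : DifferentiableAt ℝ (fun z => (NmuC d μ N z)⁻¹) (0 : Fin d → ℂ) := by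
    have h1 : DifferentiableAt ℝ (NmuC d μ N) (0 : Fin d → ℂ) :=
      diffAt_of_contDiffOn S.hΩ S.NmuC_contDiffOn h0
    exact h1.inv (by rw [hV0]; norm_num)
  have hVk'' : DifferentiableAt ℝ (wop Complex.I k (NmuC d μ N)) (0 : Fin d → ℂ) :=
    diffAt_of_contDiffOn S.hΩ (S.VC_wop_sm Complex.I k) h0
  have : gOm d μ N j k 0
      = -(wop (-Complex.I) j (wDbar k fun y => ((Real.log (N y ^ μ) : ℝ) : ℂ)) 0) := by
    rw [gOm, wD_eq_wop]
  rw [this, wop_congr hev, wop_mul hNinv hVk'', hVk', hV0]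
  simp

end Evals
/-- the components R_{ww̄kl̄} and R_{ww̄ww̄} of the curvature tensor at (0,w). -/
theorem Rcurv_w_components_at_zero (d : ℕ) (hd : 1 ≤ d) (γ μ : ℝ) (hγ : 0 < γ) (hμ : 0 < μ)
    (Ω : Set (Fin d → ℂ)) (hΩopen : IsOpen Ω) (hΩconn : IsPreconnected Ω)
    (N : (Fin d → ℂ) → ℝ) (hNsm : ContDiffOn ℝ (⊤ : ℕ∞) N Ω) (hNpos : ∀ z ∈ Ω, 0 < N z)
    (h0 : (0 : Fin d → ℂ) ∈ Ω) (hN0 : N 0 = 1)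
    (hHol : ∀ L : List (Fin d), L ≠ [] → L.foldr (fun j f => wD j f) (NmuC d μ N) 0 = 0)
    (hAhol : ∀ L : List (Fin d), L ≠ [] → L.foldr (fun j f => wDbar j f) (NmuC d μ N) 0 = 0)
    (hgOmPD : ∀ z ∈ Ω, (gOmMat d μ N z).PosDef)
    (hgPD : ∀ z ∈ Ω, ∀ w : ℂ, ‖w‖ ^ 2 < N z ^ μ →
      (gCHmat d μ N (Fin.snoc z w)).PosDef)
    (w : ℂ) (hw : ‖w‖ < 1) :
    (∀ k l : Fin d,
      Rcurv d μ N (Fin.last d) (Fin.last d) k.castSucc l.castSucc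
          (Fin.snoc (0 : Fin d → ℂ) w) =
        wDbar l (wD k (NmuC d μ N)) 0 / ((1 - ‖w‖ ^ 2 : ℝ) : ℂ) ^ 3) ∧
    Rcurv d μ N (Fin.last d) (Fin.last d) (Fin.last d) (Fin.last d)
        (Fin.snoc (0 : Fin d → ℂ) w) =
      -2 / ((1 - ‖w‖ ^ 2 : ℝ) : ℂ) ^ 4 := by
  have S : CHS d μ N Ω := ⟨hΩopen, hNsm, hNpos⟩
  set p₀ : Fin (d + 1) → ℂ := Fin.snoc (0 : Fin d → ℂ) w with hp₀def
  have hz : piL d p₀ = 0 := by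
    funext j
    simp [piL_apply, hp₀def, Fin.snoc_castSucc]
  have hlast : p₀ (Fin.last d) = w := by simp [hp₀def, Fin.snoc_last]
  have hV0 : NmuC d μ N 0 = 1 := by simp [NmuC, hN0]
  have habs : ‖w‖ ^ 2 < 1 := by nlinarith [norm_nonneg w, hw]
  have hU0 : uRf d μ N p₀ = 1 - ‖w‖ ^ 2 := by
    simp [uRf, hz, hN0, hlast, Real.one_rpow]
  have hpU : p₀ ∈ Udom d μ N Ω := by
    refine ⟨?_, ?_⟩
    · rw [hz]; exact h0
    · rw [hU0]; linarith
  set Y : ℂ := ((1 - ‖w‖ ^ 2 : ℝ) : ℂ) with hYdef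
  have hYne : Y ≠ 0 := by
    rw [hYdef]
    simp only [ne_eq, Complex.ofReal_eq_zero]
    intro h; linarith [h]
  have hiv : ivf d μ N p₀ = Y⁻¹ := by
    simp only [ivf, uCf, hU0, hYdef]
  -- vanishing of first derivatives at 0
  have hVk0 : ∀ k : Fin d, wop (-Complex.I) k (NmuC d μ N) 0 = 0 := by
    intro k
    have h := hHol [k] (by simp)
    rw [show ([k].foldr (fun j f => wD j f) (NmuC d μ N)) = wD k (NmuC d μ N) from rfl,
      wD_eq_wop] at h
    exact h
  have hVl0' : ∀ l : Fin d, wop Complex.I l (NmuC d μ N) 0 = 0 := by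
    intro l
    have h := hAhol [l] (by simp)
    rw [show ([l].foldr (fun j f => wDbar j f) (NmuC d μ N)) = wDbar l (NmuC d μ N) from rfl,
      wDbar_eq_wop] at h
    exact h
  -- the matrix M = gOmMat 0 and its entries
  set M : Matrix (Fin d) (Fin d) ℂ := gOmMat d μ N 0 with hMdef
  have hMjk : ∀ j k : Fin d,
      M j k = -(wop (-Complex.I) j (wop Complex.I k (NmuC d μ N)) 0) := by
    intro j k
    rw [hMdef]
    show gOm d μ N j k 0 = _
    exact S.gOm0 h0 hN0 j k (hVl0' k)
  have hMdet : IsUnit M.det := by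
    have hpd : (gOmMat d μ N 0).PosDef := hgOmPD 0 h0
    rw [hMdef]
    exact isUnit_iff_ne_zero.mpr hpd.det_pos.ne'
  have hMMinv : M * M⁻¹ = 1 := Matrix.mul_nonsing_inv M hMdet
  have hMinvM : M⁻¹ * M = 1 := Matrix.nonsing_inv_mul M hMdet
  -- entries of the metric matrix at p₀
  have hGcc : ∀ j q : Fin d, gCHmat d μ N p₀ (Fin.castSucc j) (Fin.castSucc q)
      = M j q * Y⁻¹ := by
    intro j q
    show gCH d μ N (Fin.castSucc j) (Fin.castSucc q) p₀ = _
    rw [S.P1 hpU hz j q (hVk0 j), hiv, hMjk j q]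
    ring
  have hGcl : ∀ j : Fin d, gCHmat d μ N p₀ (Fin.castSucc j) (Fin.last d) = 0 := by
    intro j
    exact S.P2 hpU hz j (hVk0 j)
  have hGlc : ∀ q : Fin d, gCHmat d μ N p₀ (Fin.last d) (Fin.castSucc q) = 0 := by
    intro q
    exact S.P3 hpU hz q (hVl0' q)
  have hGll : gCHmat d μ N p₀ (Fin.last d) (Fin.last d) = Y⁻¹ ^ 2 := by
    show gCH d μ N (Fin.last d) (Fin.last d) p₀ = _
    rw [S.P4 hpU hz hV0, hiv]
  -- the explicit inverse
  set Hm : Matrix (Fin (d + 1)) (Fin (d + 1)) ℂ := Matrix.of fun ζ θ =>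
    Fin.lastCases (motive := fun _ => ℂ)
      (Fin.lastCases (motive := fun _ => ℂ) (Y ^ 2) (fun _ => 0) θ)
      (fun j => Fin.lastCases (motive := fun _ => ℂ) 0 (fun q => Y * M⁻¹ j q) θ) ζ
    with hHmdef
  have hHmcc : ∀ j q : Fin d, Hm (Fin.castSucc j) (Fin.castSucc q) = Y * M⁻¹ j q := by
    intro j q; rw [hHmdef]; simp
  have hHmcl : ∀ j : Fin d, Hm (Fin.castSucc j) (Fin.last d) = 0 := by
    intro j; rw [hHmdef]; simp
  have hHmlc : ∀ q : Fin d, Hm (Fin.last d) (Fin.castSucc q) = 0 := by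
    intro q; rw [hHmdef]; simp
  have hHmll : Hm (Fin.last d) (Fin.last d) = Y ^ 2 := by
    rw [hHmdef]; simp
  have hneq : ∀ j : Fin d, Fin.castSucc j ≠ Fin.last d := fun j => (Fin.castSucc_lt_last j).ne
  have hGH : gCHmat d μ N p₀ * Hm = 1 := by
    ext ζ θ
    rw [Matrix.mul_apply, Fin.sum_univ_castSucc]
    refine Fin.lastCases ?_ (fun j => ?_) ζ
    · refine Fin.lastCases ?_ (fun q => ?_) θ
      · rw [hGll, hHmll]
        simp only [hGlc, zero_mul, Finset.sum_const_zero, zero_add]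
        rw [Matrix.one_apply_eq]
        field_simp
      · simp only [hGlc, zero_mul, Finset.sum_const_zero, zero_add, hHmlc, mul_zero]
        rw [Matrix.one_apply_ne (hneq q).symm]
    · refine Fin.lastCases ?_ (fun q => ?_) θ
      · simp only [hHmcl, mul_zero, Finset.sum_const_zero, zero_add, hGcl, zero_mul]
        rw [Matrix.one_apply_ne (hneq j)]
      · rw [hGcl, zero_mul, add_zero]
        have : ∀ r : Fin d, gCHmat d μ N p₀ (Fin.castSucc j) (Fin.castSucc r)
            * Hm (Fin.castSucc r) (Fin.castSucc q) = M j r * M⁻¹ r q := by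
          intro r
          rw [hGcc, hHmcc]
          linear_combination (M j r * M⁻¹ r q) * inv_mul_cancel₀ hYne
        rw [Finset.sum_congr rfl (fun r _ => this r), ← Matrix.mul_apply, hMMinv]
        by_cases hjq : j = q
        · subst hjq; rw [Matrix.one_apply_eq, Matrix.one_apply_eq]
        · rw [Matrix.one_apply_ne hjq, Matrix.one_apply_ne (by simpa [Fin.castSucc_inj] using hjq)]
  have hGinv : (gCHmat d μ N p₀)⁻¹ = Hm := Matrix.inv_eq_right_inv hGH
  have hYY : Y * Y⁻¹ = 1 := mul_inv_cancel₀ hYne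
  -- values of first derivatives of the metric at p₀
  have hE1 : ∀ k j : Fin d, wop (-Complex.I) k.castSucc
      (gCH d μ N (Fin.last d) j.castSucc) p₀
      = M k j * (starRingEnd ℂ) w * Y⁻¹ ^ 2 := by
    intro k j
    rw [S.E1 hpU hz k j (hVl0' j), hlast, hiv, hMjk k j]
    ring
  have hE2 : ∀ k : Fin d, wop (-Complex.I) k.castSucc
      (gCH d μ N (Fin.last d) (Fin.last d)) p₀ = 0 := fun k => S.E2 hpU hz k (hVk0 k)
  have hE3 : ∀ q l : Fin d, wop Complex.I (Fin.last d)
      (gCH d μ N q.castSucc l.castSucc) p₀ = w * M q l * Y⁻¹ ^ 2 := by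
    intro q l
    rw [S.E3 hpU hz q l (hVk0 q) (hVl0' l), hlast, hiv, hMjk q l]
    ring
  have hE4 : ∀ l : Fin d, wop Complex.I (Fin.last d)
      (gCH d μ N (Fin.last d) l.castSucc) p₀ = 0 := fun l => S.E4 hpU hz l (hVl0' l)
  have hE5 : wop (-Complex.I) (Fin.last d) (gCH d μ N (Fin.last d) (Fin.last d)) p₀
      = 2 * (starRingEnd ℂ) w * Y⁻¹ ^ 3 := by
    rw [S.E5 hpU hz hV0, hlast, hiv]
  have hE6 : wop Complex.I (Fin.last d) (gCH d μ N (Fin.last d) (Fin.last d)) p₀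
      = 2 * w * Y⁻¹ ^ 3 := by
    rw [S.E6 hpU hz hV0, hlast, hiv]
  have hE7 : ∀ q : Fin d, wop Complex.I (Fin.last d)
      (gCH d μ N q.castSucc (Fin.last d)) p₀ = 0 := fun q => S.E7 hpU hz q (hVk0 q)
  have hE8 : ∀ j : Fin d, wop (-Complex.I) (Fin.last d)
      (gCH d μ N (Fin.last d) j.castSucc) p₀ = 0 := fun j => S.E8 hpU hz j (hVl0' j)
  have hww : w * (starRingEnd ℂ) w = ((‖w‖ ^ 2 : ℝ) : ℂ) := by
    rw [Complex.mul_conj]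
    norm_cast
    rw [Complex.sq_norm]
  have hYa : Y = 1 - ((‖w‖ ^ 2 : ℝ) : ℂ) := by
    rw [hYdef]; push_cast; ring
  have hYane : (1 : ℂ) - ((‖w‖ ^ 2 : ℝ) : ℂ) ≠ 0 := hYa ▸ hYne
  have ha : ((‖w‖ ^ 2 : ℝ) : ℂ) = 1 - Y := by rw [hYa]; ring
  constructor
  · -- the `R_{ww̄ k l̄}` component
    intro k l
    have hcomm : wop Complex.I l (wop (-Complex.I) k (NmuC d μ N)) 0
        = wop (-Complex.I) k (wop Complex.I l (NmuC d μ N)) 0 :=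
      wop_comm hΩopen S.NmuC_contDiffOn h0 _ _ _ _
    have hMkl : M k l = -(wop Complex.I l (wop (-Complex.I) k (NmuC d μ N)) 0) := by
      rw [hMjk k l, hcomm]
    have hM1 := S.M1 hpU hz k l (hVk0 k) hV0
    rw [hiv] at hM1
    have hstep1 : (∑ ζ : Fin (d + 1), ∑ θ : Fin (d + 1), (gCHmat d μ N p₀)⁻¹ ζ θ
        * wop (-Complex.I) k.castSucc (gCH d μ N (Fin.last d) ζ) p₀
        * wop Complex.I (Fin.last d) (gCH d μ N θ l.castSucc) p₀)
        = w * (starRingEnd ℂ) w * Y⁻¹ ^ 3 * M k l := by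
      rw [hGinv]
      have h1 : ∀ ζ θ : Fin (d + 1), Hm ζ θ
          * wop (-Complex.I) k.castSucc (gCH d μ N (Fin.last d) ζ) p₀
          * wop Complex.I (Fin.last d) (gCH d μ N θ l.castSucc) p₀
          = Hm ζ θ
            * Fin.lastCases (motive := fun _ => ℂ) 0
                (fun j => M k j * (starRingEnd ℂ) w * Y⁻¹ ^ 2) ζ
            * Fin.lastCases (motive := fun _ => ℂ) 0
                (fun q => w * M q l * Y⁻¹ ^ 2) θ := by
        intro ζ θ
        have e1 : wop (-Complex.I) k.castSucc (gCH d μ N (Fin.last d) ζ) p₀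
            = Fin.lastCases (motive := fun _ => ℂ) 0
                (fun j => M k j * (starRingEnd ℂ) w * Y⁻¹ ^ 2) ζ := by
          refine Fin.lastCases ?_ (fun j => ?_) ζ
          · rw [Fin.lastCases_last]; exact hE2 k
          · rw [Fin.lastCases_castSucc]; exact hE1 k j
        have e2 : wop Complex.I (Fin.last d) (gCH d μ N θ l.castSucc) p₀
            = Fin.lastCases (motive := fun _ => ℂ) 0
                (fun q => w * M q l * Y⁻¹ ^ 2) θ := by
          refine Fin.lastCases ?_ (fun q => ?_) θ
          · rw [Fin.lastCases_last]; exact hE4 l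
          · rw [Fin.lastCases_castSucc]; exact hE3 q l
        rw [e1, e2]
      rw [Finset.sum_congr rfl (fun ζ _ => Finset.sum_congr rfl (fun θ _ => h1 ζ θ))]
      rw [Fin.sum_univ_castSucc]
      simp only [Fin.sum_univ_castSucc, Fin.lastCases_castSucc, Fin.lastCases_last,
        hHmcc, hHmcl, hHmlc, hHmll, mul_zero, zero_mul, add_zero, zero_add,
        Finset.sum_const_zero]
      have h2 : ∀ j q : Fin d, Y * M⁻¹ j q * (M k j * (starRingEnd ℂ) w * Y⁻¹ ^ 2)
          * (w * M q l * Y⁻¹ ^ 2)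
          = w * (starRingEnd ℂ) w * Y⁻¹ ^ 3 * (M k j * (M⁻¹ j q * M q l)) := by
        intro j q
        linear_combination (w * (starRingEnd ℂ) w * Y⁻¹ ^ 3 * M k j * M⁻¹ j q * M q l) * hYY
      rw [Finset.sum_congr rfl (fun j _ => Finset.sum_congr rfl (fun q _ => h2 j q))]
      simp only [← Finset.mul_sum]
      have h3 : ∀ j : Fin d, (∑ q : Fin d, M⁻¹ j q * M q l)
          = (1 : Matrix (Fin d) (Fin d) ℂ) j l := by
        intro j
        rw [← Matrix.mul_apply, hMinvM]
      rw [Finset.sum_congr rfl (fun j _ => by rw [h3 j])]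
      simp [Matrix.one_apply, mul_ite, Finset.sum_ite_eq]
    simp only [Rcurv, wD_eq_wop, wDbar_eq_wop]
    rw [hM1, hstep1, hMkl, hww, ha]
    field_simp [hYne]
    ring
  · -- the `R_{ww̄ w w̄}` component
    have hM2 := S.M2 hpU hz hV0
    rw [hiv, hlast] at hM2
    have hstep2 : (∑ ζ : Fin (d + 1), ∑ θ : Fin (d + 1), (gCHmat d μ N p₀)⁻¹ ζ θ
        * wop (-Complex.I) (Fin.last d) (gCH d μ N (Fin.last d) ζ) p₀
        * wop Complex.I (Fin.last d) (gCH d μ N θ (Fin.last d)) p₀)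
        = 4 * (w * (starRingEnd ℂ) w) * Y⁻¹ ^ 4 := by
      rw [hGinv]
      have h1 : ∀ ζ θ : Fin (d + 1), Hm ζ θ
          * wop (-Complex.I) (Fin.last d) (gCH d μ N (Fin.last d) ζ) p₀
          * wop Complex.I (Fin.last d) (gCH d μ N θ (Fin.last d)) p₀
          = Hm ζ θ
            * Fin.lastCases (motive := fun _ => ℂ)
                (2 * (starRingEnd ℂ) w * Y⁻¹ ^ 3) (fun _ => 0) ζ
            * Fin.lastCases (motive := fun _ => ℂ)
                (2 * w * Y⁻¹ ^ 3) (fun _ => 0) θ := by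
        intro ζ θ
        have e1 : wop (-Complex.I) (Fin.last d) (gCH d μ N (Fin.last d) ζ) p₀
            = Fin.lastCases (motive := fun _ => ℂ)
                (2 * (starRingEnd ℂ) w * Y⁻¹ ^ 3) (fun _ => 0) ζ := by
          refine Fin.lastCases ?_ (fun j => ?_) ζ
          · rw [Fin.lastCases_last]; exact hE5
          · rw [Fin.lastCases_castSucc]; exact hE8 j
        have e2 : wop Complex.I (Fin.last d) (gCH d μ N θ (Fin.last d)) p₀
            = Fin.lastCases (motive := fun _ => ℂ)
                (2 * w * Y⁻¹ ^ 3) (fun _ => 0) θ := by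
          refine Fin.lastCases ?_ (fun q => ?_) θ
          · rw [Fin.lastCases_last]; exact hE6
          · rw [Fin.lastCases_castSucc]; exact hE7 q
        rw [e1, e2]
      rw [Finset.sum_congr rfl (fun ζ _ => Finset.sum_congr rfl (fun θ _ => h1 ζ θ))]
      rw [Fin.sum_univ_castSucc]
      simp only [Fin.sum_univ_castSucc, Fin.lastCases_castSucc, Fin.lastCases_last,
        hHmcc, hHmcl, hHmlc, hHmll, mul_zero, zero_mul, add_zero, zero_add,
        Finset.sum_const_zero]
      linear_combination (4 * w * (starRingEnd ℂ) w * Y⁻¹ ^ 4 * (Y * Y⁻¹ + 1)) * hYY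
    simp only [Rcurv, wD_eq_wop, wDbar_eq_wop]
    rw [hM2, hstep2, hww, ha]
    field_simp [hYne]
    ring
end
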